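/- arXiv:2306.04122 — 3 statements merged into one kernel-verified Lean document; each statement's English description precedes it below -/
import Mathlib

section
/- For a Hopf algebra H with bijective antipode and a right H-Hopf module M, the map M^co(H) ⊗ H → M sending v ⊗ h to v.h is a linear isomorphism, with inverse m ↦ E_M(m_(0)) ⊗ m_(1), where E_M(m) = m_(0).S(m_(1)). -/
open TensorProduct

section Base
variable (k : Type) [Field k]

/-- Koszul sign operator on a tensor product, built from parity involutions. -/
noncomputable def koszul {M N : Type} [AddCommGroup M] [Module k M] [AddCommGroup N] [Module k N]
    (J₁ : M →ₗ[k] M) (J₂ : N →ₗ[k] N) : M ⊗[k] N →ₗ[k] M ⊗[k] N :=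
  (2:k)⁻¹ • (LinearMap.id + TensorProduct.map J₁ LinearMap.id
      + TensorProduct.map LinearMap.id J₂ - TensorProduct.map J₁ J₂)

variable (A : Type) [Ring A] [Algebra k A]

/-- Signed ("super") multiplication `(A ⊗ A) ⊗ (A ⊗ A) → A ⊗ A`,
`(a ⊗ b) ⊗ (c ⊗ d) ↦ (−1)^{|b||c|} (ac) ⊗ (bd)`. -/
noncomputable def tensorSuperMul (J : A →ₗ[k] A) :
    (A ⊗[k] A) ⊗[k] (A ⊗[k] A) →ₗ[k] A ⊗[k] A :=
  TensorProduct.map (LinearMap.mul' k A) (LinearMap.mul' k A)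
    ∘ₗ koszul k (TensorProduct.map LinearMap.id J) (TensorProduct.map J LinearMap.id)
    ∘ₗ (TensorProduct.tensorTensorTensorComm k A A A A).toLinearMap

/-- A Hopf superalgebra, encoded by its parity involution `J` (the grading is by
`J`-eigenspaces: even part `{a | J a = a}`, odd part `{a | J a = -a}`). -/
structure HopfSuperData : Type where
  J : A →ₐ[k] A
  J_invol : ∀ a, J (J a) = a
  comul : A →ₗ[k] A ⊗[k] A
  counit : A →ₗ[k] k
  antipode : A →ₗ[k] A
  comul_J : ∀ a, comul (J a) = TensorProduct.map J.toLinearMap J.toLinearMap (comul a)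
  counit_J : ∀ a, counit (J a) = counit a
  antipode_J : ∀ a, antipode (J a) = J (antipode a)
  coassoc : (TensorProduct.assoc k A A A).toLinearMap ∘ₗ comul.rTensor A ∘ₗ comul
      = comul.lTensor A ∘ₗ comul
  rTensor_counit_comul : ∀ a, (TensorProduct.lid k A) (counit.rTensor A (comul a)) = a
  lTensor_counit_comul : ∀ a, (TensorProduct.rid k A) (counit.lTensor A (comul a)) = a
  comul_one : comul 1 = 1 ⊗ₜ[k] 1
  counit_one : counit 1 = 1
  counit_mul : ∀ a b, counit (a * b) = counit a * counit b
  comul_mul : ∀ a b, comul (a * b) = tensorSuperMul k A J.toLinearMap (comul a ⊗ₜ[k] comul b)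
  mul_antipode_rTensor_comul :
      ∀ a, LinearMap.mul' k A (antipode.rTensor A (comul a)) = algebraMap k A (counit a)
  mul_antipode_lTensor_comul :
      ∀ a, LinearMap.mul' k A (antipode.lTensor A (comul a)) = algebraMap k A (counit a)

variable {k A}

namespace HopfSuperData

variable {B : Type} [Ring B] [Algebra k B]

/-- The odd part of a Hopf superalgebra is nonzero. -/
def HasOddPart (H : HopfSuperData k A) : Prop := ∃ a : A, a ≠ 0 ∧ H.J a = -a

/-- Purely even Hopf superalgebras, i.e. ordinary Hopf algebras. -/
def PurelyEven (H : HopfSuperData k A) : Prop := ∀ a : A, H.J a = a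

/-- Even group-like elements. -/
def IsGroupLike (H : HopfSuperData k A) (g : A) : Prop :=
  H.J g = g ∧ H.counit g = 1 ∧ H.comul g = g ⊗ₜ[k] g

/-- An algebra isomorphism is an isomorphism of Hopf superalgebras if it preserves the
grading, the comultiplication and the counit. -/
def IsIso (H : HopfSuperData k A) (H' : HopfSuperData k B) (e : A ≃ₐ[k] B) : Prop :=
  (∀ a, e (H.J a) = H'.J (e a)) ∧
  (∀ a, H'.comul (e a) = TensorProduct.map e.toLinearMap e.toLinearMap (H.comul a)) ∧
  (∀ a, H'.counit (e a) = H.counit a)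

end HopfSuperData

end Base
section Ext
variable {k : Type} [Field k] {A A' : Type} [Ring A] [Algebra k A] [Ring A'] [Algebra k A']

namespace HopfSuperData

/-- The part of the comultiplication whose second tensor leg is even. -/
noncomputable def comulEvenPart (H : HopfSuperData k A) : A →ₗ[k] A ⊗[k] A :=
  (2:k)⁻¹ • (H.comul + H.J.toLinearMap.lTensor A ∘ₗ H.comul)

/-- The part of the comultiplication whose second tensor leg is odd. -/
noncomputable def comulOddPart (H : HopfSuperData k A) : A →ₗ[k] A ⊗[k] A :=
  (2:k)⁻¹ • (H.comul - H.J.toLinearMap.lTensor A ∘ₗ H.comul)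

/-- `J^i` for `i : ZMod 2`. -/
noncomputable def Jpow (H : HopfSuperData k A) (i : ZMod 2) : A →ₗ[k] A :=
  if i = 0 then LinearMap.id else H.J.toLinearMap

/-- `β i a` represents `a # σ^i` in the bosonization `H # k[ℤ/2]`: this predicate says that
an ordinary Hopf algebra `B`, with structural maps given by Mathlib's `HopfAlgebra` class,
is (a realization of) the Radford–Majid bosonization of the Hopf superalgebra `H`. -/
structure IsBosonization {B : Type} [Ring B] [HopfAlgebra k B]
    (H : HopfSuperData k A) (β : ZMod 2 → A →ₗ[k] B) : Prop where
  bij : Function.Bijective fun p : A × A => β 0 p.1 + β 1 p.2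
  map_one : β 0 1 = 1
  map_mul : ∀ (i j : ZMod 2) (a a' : A), β i a * β j a' = β (i + j) (a * H.Jpow i a')
  map_comul : ∀ (i : ZMod 2) (a : A), Coalgebra.comul (β i a) =
      TensorProduct.map (β i) (β i) (H.comulEvenPart a)
      + TensorProduct.map (β (i+1)) (β i) (H.comulOddPart a)
  map_counit : ∀ (i : ZMod 2) (a : A), Coalgebra.counit (β i a) = H.counit a

end HopfSuperData

/-- Evaluation of a bilinear pairing on tensor squares:
`(a ⊗ a') ⊗ (b ⊗ b') ↦ ⟨a,b⟩⟨a',b'⟩`. -/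
noncomputable def pairTensor (Bp : A →ₗ[k] A' →ₗ[k] k) :
    (A ⊗[k] A) ⊗[k] (A' ⊗[k] A') →ₗ[k] k :=
  LinearMap.mul' k k
    ∘ₗ TensorProduct.map (TensorProduct.lift Bp) (TensorProduct.lift Bp)
    ∘ₗ (TensorProduct.tensorTensorTensorComm k A A A' A').toLinearMap

/-- A Hopf (super)pairing between two Hopf superalgebras. -/
structure IsHopfPairing (H : HopfSuperData k A) (H' : HopfSuperData k A')
    (Bp : A →ₗ[k] A' →ₗ[k] k) : Prop where
  parity : ∀ a a', Bp (H.J a) (H'.J a') = Bp a a'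
  pair_mul_right : ∀ (a : A) (b b' : A'),
    Bp a (b * b') = pairTensor Bp (H.comul a ⊗ₜ[k] (b ⊗ₜ[k] b'))
  pair_mul_left : ∀ (a a' : A) (b : A'),
    Bp (a * a') b = pairTensor Bp ((a ⊗ₜ[k] a') ⊗ₜ[k] H'.comul b)
  pair_one_right : ∀ a, Bp a 1 = H.counit a
  pair_one_left : ∀ b, Bp 1 b = H'.counit b

/-- Nondegeneracy of a bilinear pairing. -/
def PairNondeg (Bp : A →ₗ[k] A' →ₗ[k] k) : Prop :=
  (∀ a, (∀ b, Bp a b = 0) → a = 0) ∧ (∀ b, (∀ a, Bp a b = 0) → b = 0)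

end Ext

section Ord
variable (k : Type) [Field k] {A : Type} [AddCommGroup A] [Module k A] [Coalgebra k A]

/-- The right hit action `α ⇀ a = a₍₁₎ α(a₍₂₎)`. -/
noncomputable def hitR (α : A →ₗ[k] k) : A →ₗ[k] A :=
  (TensorProduct.rid k A).toLinearMap ∘ₗ α.lTensor A ∘ₗ Coalgebra.comul

/-- The left hit action `a ↼ α = α(a₍₁₎) a₍₂₎`. -/
noncomputable def hitL (α : A →ₗ[k] k) : A →ₗ[k] A :=
  (TensorProduct.lid k A).toLinearMap ∘ₗ α.rTensor A ∘ₗ Coalgebra.comul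

/-- Convolution product of two functionals on a coalgebra. -/
noncomputable def conv (α β : A →ₗ[k] k) : A →ₗ[k] k :=
  LinearMap.mul' k k ∘ₗ TensorProduct.map α β ∘ₗ Coalgebra.comul

/-- Group-like element of an ordinary coalgebra. -/
def OrdGroupLike (g : A) : Prop :=
  Coalgebra.counit g = (1:k) ∧ Coalgebra.comul g = g ⊗ₜ[k] g

end Ord

section Adm
variable (k : Type) [Field k] {A : Type} [Ring A] [HopfAlgebra k A]

/-- An admissible datum `(g, α)` for a Hopf algebra `A`: `g` is a group-like of order 2,
`α` is a character of convolution-order 2, and `α g = -1`. -/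
def IsAdmissible (g : A) (α : A →ₐ[k] k) : Prop :=
  OrdGroupLike k g ∧ g * g = 1 ∧ g ≠ 1
    ∧ conv k α.toLinearMap α.toLinearMap = Coalgebra.counit
    ∧ α.toLinearMap ≠ Coalgebra.counit ∧ α g = -1

end Adm

section GA
variable (k : Type) [Field k] (M : Type) [Monoid M]

/-- Comultiplication of the group (monoid) algebra: every `of g` is group-like. -/
noncomputable def gaComul : MonoidAlgebra k M →ₗ[k] MonoidAlgebra k M ⊗[k] MonoidAlgebra k M :=
  Finsupp.lsum k (fun g =>
    LinearMap.toSpanSingleton k _ (MonoidAlgebra.of k M g ⊗ₜ[k] MonoidAlgebra.of k M g))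
    ∘ₗ (MonoidAlgebra.coeffLinearEquiv k).toLinearMap

/-- Counit of the group (monoid) algebra. -/
noncomputable def gaCounit : MonoidAlgebra k M →ₗ[k] k :=
  Finsupp.lsum k (fun _ => LinearMap.id) ∘ₗ (MonoidAlgebra.coeffLinearEquiv k).toLinearMap

end GA
section HopfModule
variable (k : Type) [Field k] (H : Type) [Ring H] [HopfAlgebra k H]
  (M : Type) [AddCommGroup M] [Module k M]

/-- A right `H`-Hopf module: simultaneously a right `H`-module and right `H`-comodule such that
`(m.h)₍₀₎ ⊗ (m.h)₍₁₎ = m₍₀₎.h₍₁₎ ⊗ m₍₁₎h₍₂₎`. -/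
structure RightHopfModule : Type where
  act : M →ₗ[k] H →ₗ[k] M
  act_one : ∀ m, act m 1 = m
  act_mul : ∀ m h h', act (act m h) h' = act m (h * h')
  coact : M →ₗ[k] M ⊗[k] H
  coact_coassoc : (TensorProduct.assoc k M H H).toLinearMap ∘ₗ coact.rTensor H ∘ₗ coact
      = (Coalgebra.comul (R := k) (A := H)).lTensor M ∘ₗ coact
  coact_counit : ∀ m,
      (TensorProduct.rid k M) ((Coalgebra.counit (R := k) (A := H)).lTensor M (coact m)) = m
  compat : ∀ (m : M) (h : H), coact (act m h) =
      (TensorProduct.map (TensorProduct.lift act) (LinearMap.mul' k H))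
        ((TensorProduct.tensorTensorTensorComm k M H H H).toLinearMap
          (coact m ⊗ₜ[k] Coalgebra.comul h))

variable {k H M}

namespace RightHopfModule

/-- The coinvariant subspace `M^co(H) = {m | m₍₀₎ ⊗ m₍₁₎ = m ⊗ 1}`. -/
noncomputable def coinv (ρ : RightHopfModule k H M) : Submodule k M :=
  LinearMap.ker (ρ.coact - (TensorProduct.mk k M H).flip 1)

/-- The projection `E_M : m ↦ m₍₀₎.S(m₍₁₎)`. -/
noncomputable def Emap (ρ : RightHopfModule k H M) : M →ₗ[k] M :=
  TensorProduct.lift ρ.act ∘ₗ (HopfAlgebra.antipode (R := k) (A := H)).lTensor M ∘ₗ ρ.coact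

/-- The subspace `M·H⁺`, where `H⁺ = ker ε`. -/
noncomputable def MHplus (ρ : RightHopfModule k H M) : Submodule k M :=
  Submodule.span k {x : M | ∃ (m : M) (h : H), Coalgebra.counit (R := k) h = 0 ∧ x = ρ.act m h}

end RightHopfModule
end HopfModule
open Coalgebra

section Conv

variable {k : Type} [Field k] {H : Type} [Ring H] [HopfAlgebra k H]
variable {B : Type} [Ring B] [Algebra k B]

/-- Sum of counit-weighted right legs. -/
lemma repr_sum_counit_smul_right {a : H} (r : Coalgebra.Repr k a (H × H)) :
    ∑ i ∈ r.index, Coalgebra.counit (R := k) (r.left i) • r.right i = a := by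
  have h := Coalgebra.sum_counit_tmul_eq r
  have := congrArg (TensorProduct.lid k H) h
  simp only [map_sum, TensorProduct.lid_tmul] at this
  simpa using this

lemma repr_sum_counit_smul_left {a : H} (r : Coalgebra.Repr k a (H × H)) :
    ∑ i ∈ r.index, Coalgebra.counit (R := k) (r.right i) • r.left i = a := by
  have h := Coalgebra.sum_tmul_counit_eq r
  have := congrArg (TensorProduct.rid k H) h
  simp only [map_sum, TensorProduct.rid_tmul] at this
  simpa using this

/-- Convolution product of linear maps from a Hopf algebra to an algebra. -/
noncomputable def cv (f g : H →ₗ[k] B) : H →ₗ[k] B :=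
  LinearMap.mul' k B ∘ₗ TensorProduct.map f g ∘ₗ Coalgebra.comul

lemma cv_repr (f g : H →ₗ[k] B) {a : H} (r : Coalgebra.Repr k a (H × H)) :
    cv f g a = ∑ i ∈ r.index, f (r.left i) * g (r.right i) := by
  simp only [cv, LinearMap.comp_apply, ← r.eq, map_sum, TensorProduct.map_tmul,
    LinearMap.mul'_apply]

/-- The unit of the convolution algebra. -/
noncomputable def cvOne : H →ₗ[k] B :=
  Algebra.linearMap k B ∘ₗ Coalgebra.counit

lemma cv_one_right (f : H →ₗ[k] B) : cv f cvOne = f := by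
  ext a
  set r := ℛ k a
  rw [cv_repr f cvOne r]
  have : ∀ i ∈ r.index, f (r.left i) * cvOne (k := k) (r.right i)
      = Coalgebra.counit (R := k) (r.right i) • f (r.left i) := by
    intro i _
    simp only [cvOne, LinearMap.comp_apply, Algebra.linearMap_apply]
    rw [Algebra.smul_def, Algebra.commutes]
  rw [Finset.sum_congr rfl this]
  rw [show (∑ i ∈ r.index, Coalgebra.counit (R := k) (r.right i) • f (r.left i))
        = f (∑ i ∈ r.index, Coalgebra.counit (R := k) (r.right i) • r.left i) by
      simp [map_sum]]
  rw [repr_sum_counit_smul_left r]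

lemma cv_one_left (f : H →ₗ[k] B) : cv cvOne f = f := by
  ext a
  set r := ℛ k a
  rw [cv_repr cvOne f r]
  have : ∀ i ∈ r.index, cvOne (k := k) (r.left i) * f (r.right i)
      = Coalgebra.counit (R := k) (r.left i) • f (r.right i) := by
    intro i _
    simp only [cvOne, LinearMap.comp_apply, Algebra.linearMap_apply]
    rw [Algebra.smul_def]
  rw [Finset.sum_congr rfl this]
  rw [show (∑ i ∈ r.index, Coalgebra.counit (R := k) (r.left i) • f (r.right i))
      = f (∑ i ∈ r.index, Coalgebra.counit (R := k) (r.left i) • r.right i) by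
    simp [map_sum]]
  rw [repr_sum_counit_smul_right r]

lemma cv_assoc (f g h : H →ₗ[k] B) : cv (cv f g) h = cv f (cv g h) := by
  ext a
  set r := ℛ k a with hr
  set a₁ : (i : H × H) → Coalgebra.Repr k (r.left i) (H × H) := fun i => ℛ k (r.left i)
  set a₂ : (i : H × H) → Coalgebra.Repr k (r.right i) (H × H) := fun i => ℛ k (r.right i)
  have key := Coalgebra.sum_tmul_tmul_eq r a₁ a₂
  have key2 := congrArg (LinearMap.mul' k B ∘ₗ (LinearMap.mul' k B).lTensor B
      ∘ₗ TensorProduct.map f (TensorProduct.map g h)) key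
  simp only [map_sum, LinearMap.comp_apply, TensorProduct.map_tmul, LinearMap.lTensor_tmul,
    LinearMap.mul'_apply] at key2
  rw [cv_repr (cv f g) h r, cv_repr f (cv g h) r]
  calc ∑ i ∈ r.index, cv f g (r.left i) * h (r.right i)
      = ∑ i ∈ r.index, ∑ j ∈ (a₁ i).index,
          f ((a₁ i).left j) * (g ((a₁ i).right j) * h (r.right i)) := by
        refine Finset.sum_congr rfl fun i _ => ?_
        rw [cv_repr f g (a₁ i), Finset.sum_mul]
        exact Finset.sum_congr rfl fun j _ => (mul_assoc _ _ _)
    _ = ∑ i ∈ r.index, ∑ j ∈ (a₂ i).index,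
          f (r.left i) * (g ((a₂ i).left j) * h ((a₂ i).right j)) := key2
    _ = ∑ i ∈ r.index, f (r.left i) * cv g h (r.right i) := by
        refine Finset.sum_congr rfl fun i _ => ?_
        rw [cv_repr g h (a₂ i), Finset.mul_sum]

lemma cv_algHom (φ : H →ₐ[k] B) (f g : H →ₗ[k] H) :
    φ.toLinearMap ∘ₗ cv f g = cv (φ.toLinearMap ∘ₗ f) (φ.toLinearMap ∘ₗ g) := by
  ext a
  set r := ℛ k a
  simp only [LinearMap.comp_apply, cv_repr f g r,
    cv_repr (φ.toLinearMap ∘ₗ f) (φ.toLinearMap ∘ₗ g) r, map_sum]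
  exact Finset.sum_congr rfl fun i _ => map_mul φ _ _

end Conv

section Anticomul

variable {k : Type} [Field k] {H : Type} [Ring H] [HopfAlgebra k H]

/-- The "op comul then antipode on both legs" map. -/
noncomputable def antiTheta (k H : Type) [Field k] [Ring H] [HopfAlgebra k H] :
    H ⊗[k] H →ₗ[k] H ⊗[k] H :=
  TensorProduct.map (HopfAlgebra.antipode (R := k)) (HopfAlgebra.antipode (R := k))
    ∘ₗ (TensorProduct.comm k H H).toLinearMap

@[simp] lemma antiTheta_tmul (x y : H) :
    antiTheta k H (x ⊗ₜ[k] y)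
      = HopfAlgebra.antipode (R := k) y ⊗ₜ[k] HopfAlgebra.antipode (R := k) x := by
  simp [antiTheta]

lemma cv_antipode_id :
    cv (B := H) (HopfAlgebra.antipode (R := k) (A := H)) LinearMap.id = cvOne := by
  rw [cv, cvOne, ← HopfAlgebra.mul_antipode_rTensor_comul (R := k) (A := H)]
  rfl

lemma cv_id_antipode :
    cv (B := H) LinearMap.id (HopfAlgebra.antipode (R := k) (A := H)) = cvOne := by
  rw [cv, cvOne, ← HopfAlgebra.mul_antipode_lTensor_comul (R := k) (A := H)]
  congr 1

lemma cv_comul_comulS :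
    cv (B := H ⊗[k] H) (Coalgebra.comul (R := k) (A := H))
      (Coalgebra.comul (R := k) ∘ₗ HopfAlgebra.antipode (R := k) (A := H)) = cvOne := by
  have h1 : (Coalgebra.comul (R := k) (A := H))
      = (Bialgebra.comulAlgHom k H).toLinearMap ∘ₗ LinearMap.id := rfl
  have h2 : (Coalgebra.comul (R := k) ∘ₗ HopfAlgebra.antipode (R := k) (A := H))
      = (Bialgebra.comulAlgHom k H).toLinearMap ∘ₗ HopfAlgebra.antipode (R := k) := rfl
  rw [h2, h1, ← cv_algHom, cv_id_antipode]
  ext a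
  simp [cvOne, Algebra.TensorProduct.algebraMap_apply, Algebra.algebraMap_eq_smul_one,
    TensorProduct.smul_tmul']

lemma cv_comulS_comul :
    cv (B := H ⊗[k] H) (Coalgebra.comul (R := k) ∘ₗ HopfAlgebra.antipode (R := k) (A := H))
      (Coalgebra.comul (R := k) (A := H)) = cvOne := by
  have h1 : (Coalgebra.comul (R := k) (A := H))
      = (Bialgebra.comulAlgHom k H).toLinearMap ∘ₗ LinearMap.id := rfl
  have h2 : (Coalgebra.comul (R := k) ∘ₗ HopfAlgebra.antipode (R := k) (A := H))
      = (Bialgebra.comulAlgHom k H).toLinearMap ∘ₗ HopfAlgebra.antipode (R := k) := rfl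
  rw [h2, h1, ← cv_algHom, cv_antipode_id]
  ext a
  simp [cvOne, Algebra.TensorProduct.algebraMap_apply, Algebra.algebraMap_eq_smul_one,
    TensorProduct.smul_tmul']

end Anticomul

section AnticomulMain

variable {k : Type} [Field k] {H : Type} [Ring H] [HopfAlgebra k H]

local notation "𝒮" => HopfAlgebra.antipode (R := k) (A := H)
local notation "Δ°" => Coalgebra.comul (R := k) (A := H)

lemma cv_T_comul :
    cv (B := H ⊗[k] H) (antiTheta k H ∘ₗ Δ°) Δ° = cvOne := by
  ext a
  have e0 : cv (B := H ⊗[k] H) (antiTheta k H ∘ₗ Δ°) Δ° a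
      = LinearMap.mul' k (H ⊗[k] H) (TensorProduct.map (antiTheta k H) LinearMap.id
          (TensorProduct.map Δ° Δ° ((Δ°) a))) := by
    have hm : TensorProduct.map (antiTheta k H ∘ₗ Δ°) (Δ°)
        = TensorProduct.map (antiTheta k H) LinearMap.id ∘ₗ TensorProduct.map Δ° Δ° := by
      rw [← TensorProduct.map_comp, LinearMap.id_comp]
    simp [cv, hm]
  have e1 : TensorProduct.map Δ° Δ° ((Δ°) a)
      = (Δ°).lTensor (H ⊗[k] H)
          ((TensorProduct.assoc k H H H).symm ((Δ°).lTensor H ((Δ°) a))) := by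
    conv_rhs => rw [Coalgebra.coassoc_symm_apply, ← LinearMap.comp_apply,
      LinearMap.lTensor_comp_rTensor]
  set W : H ⊗[k] (H ⊗[k] (H ⊗[k] H)) →ₗ[k] H ⊗[k] H :=
    LinearMap.mul' k (H ⊗[k] H) ∘ₗ TensorProduct.map (antiTheta k H) LinearMap.id
      ∘ₗ (TensorProduct.assoc k H H (H ⊗[k] H)).symm.toLinearMap with hW
  have hΦ : LinearMap.mul' k (H ⊗[k] H) ∘ₗ TensorProduct.map (antiTheta k H) LinearMap.id
        ∘ₗ (Δ°).lTensor (H ⊗[k] H) ∘ₗ (TensorProduct.assoc k H H H).symm.toLinearMap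
      = W ∘ₗ ((Δ°).lTensor H).lTensor H := by
    ext x y z
    simp [hW]
  have hco : (Δ°).lTensor H ∘ₗ Δ°
      = ((TensorProduct.assoc k H H H).toLinearMap ∘ₗ (Δ°).rTensor H) ∘ₗ Δ° := by
    rw [LinearMap.comp_assoc]
    exact (Coalgebra.coassoc (R := k)).symm
  have hαβ : ((Δ°).lTensor H).lTensor H ((Δ°).lTensor H ((Δ°) a))
      = (((TensorProduct.assoc k H H H).toLinearMap ∘ₗ (Δ°).rTensor H).lTensor H)
          ((Δ°).lTensor H ((Δ°) a)) := by
    rw [← LinearMap.comp_apply, ← LinearMap.lTensor_comp, ← LinearMap.comp_apply (g := (Δ°).lTensor H),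
      ← LinearMap.lTensor_comp, hco]
  have e2 := LinearMap.congr_fun hΦ ((Δ°).lTensor H ((Δ°) a))
  simp only [LinearMap.comp_apply, LinearEquiv.coe_coe] at e2
  rw [e0, e1, e2, hαβ]
  -- main evaluation with representations
  set r := ℛ k a with hr
  set t : (i : H × H) → Coalgebra.Repr k (r.right i) (H × H) := fun i => ℛ k (r.right i) with ht
  have h3 : (Δ°).lTensor H ((Δ°) a) = ∑ i ∈ r.index, ∑ m ∈ (t i).index,
      r.left i ⊗ₜ[k] ((t i).left m ⊗ₜ[k] (t i).right m) := by
    rw [← r.eq]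
    simp only [map_sum, LinearMap.lTensor_tmul]
    exact Finset.sum_congr rfl fun i _ => by rw [← (t i).eq, TensorProduct.tmul_sum]
  rw [h3]
  simp only [map_sum]
  have h4 : ∀ i ∈ r.index, ∀ m ∈ (t i).index,
      W ((((TensorProduct.assoc k H H H).toLinearMap ∘ₗ (Δ°).rTensor H).lTensor H)
          (r.left i ⊗ₜ[k] ((t i).left m ⊗ₜ[k] (t i).right m)))
      = (1 : H) ⊗ₜ[k] ((𝒮) (r.left i)
          * (Coalgebra.counit (R := k) ((t i).left m) • (t i).right m)) := by
    intro i _ m _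
    set u := ℛ k ((t i).left m) with hu
    have h5 : (((TensorProduct.assoc k H H H).toLinearMap ∘ₗ (Δ°).rTensor H).lTensor H)
        (r.left i ⊗ₜ[k] ((t i).left m ⊗ₜ[k] (t i).right m))
        = ∑ p ∈ u.index, r.left i ⊗ₜ[k] (u.left p ⊗ₜ[k] (u.right p ⊗ₜ[k] (t i).right m)) := by
      simp only [LinearMap.lTensor_tmul, LinearMap.comp_apply, LinearMap.rTensor_tmul]
      rw [← u.eq]
      simp only [TensorProduct.sum_tmul, map_sum, TensorProduct.tmul_sum]
      simp [TensorProduct.assoc_tmul]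
    rw [h5, map_sum]
    have h6 : ∀ p ∈ u.index, W (r.left i ⊗ₜ[k] (u.left p ⊗ₜ[k] (u.right p ⊗ₜ[k] (t i).right m)))
        = ((𝒮) (u.left p) * u.right p) ⊗ₜ[k] ((𝒮) (r.left i) * (t i).right m) := by
      intro p _
      simp [hW, Algebra.TensorProduct.tmul_mul_tmul]
    rw [Finset.sum_congr rfl h6, ← TensorProduct.sum_tmul, HopfAlgebra.sum_antipode_mul_eq_algebraMap_counit u,
      Algebra.algebraMap_eq_smul_one, TensorProduct.smul_tmul, mul_smul_comm]
  rw [Finset.sum_congr rfl (fun i hi => Finset.sum_congr rfl (h4 i hi))]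
  have h7 : ∀ i ∈ r.index, ∑ m ∈ (t i).index, (1 : H) ⊗ₜ[k]
        ((𝒮) (r.left i) * (Coalgebra.counit (R := k) ((t i).left m) • (t i).right m))
      = (1 : H) ⊗ₜ[k] ((𝒮) (r.left i) * r.right i) := by
    intro i _
    rw [← TensorProduct.tmul_sum, ← Finset.mul_sum, repr_sum_counit_smul_right (t i)]
  rw [Finset.sum_congr rfl h7, ← TensorProduct.tmul_sum, HopfAlgebra.sum_antipode_mul_eq_algebraMap_counit r]
  simp only [cvOne, LinearMap.comp_apply, Algebra.linearMap_apply,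
    Algebra.TensorProduct.algebraMap_apply, Algebra.algebraMap_eq_smul_one,
    TensorProduct.smul_tmul]
  rw [TensorProduct.tmul_smul, Algebra.TensorProduct.one_def]

lemma comul_antipode_comp :
    (Δ°) ∘ₗ 𝒮 = antiTheta k H ∘ₗ Δ° := by
  have h1 : antiTheta k H ∘ₗ Δ° = cv (B := H ⊗[k] H) (antiTheta k H ∘ₗ Δ°) cvOne :=
    (cv_one_right _).symm
  rw [h1, ← cv_comul_comulS, ← cv_assoc, cv_T_comul, cv_one_left]

lemma comul_antipode (a : H) :
    (Δ°) ((𝒮) a) = TensorProduct.map 𝒮 𝒮 ((TensorProduct.comm k H H) ((Δ°) a)) := by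
  have := LinearMap.congr_fun (comul_antipode_comp (k := k) (H := H)) a
  simpa [antiTheta] using this

end AnticomulMain

section HM

variable {k : Type} [Field k] {H : Type} [Ring H] [HopfAlgebra k H]
  {M : Type} [AddCommGroup M] [Module k M] (ρ : RightHopfModule k H M)

local notation "𝒮" => HopfAlgebra.antipode (R := k) (A := H)
local notation "Δ°" => Coalgebra.comul (R := k) (A := H)

namespace RightHopfModule

lemma mem_coinv_iff (m : M) : m ∈ ρ.coinv ↔ ρ.coact m = m ⊗ₜ[k] 1 := by
  simp only [coinv, LinearMap.mem_ker, LinearMap.sub_apply, sub_eq_zero]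
  rfl

lemma compat_comp : ρ.coact ∘ₗ TensorProduct.lift ρ.act
    = TensorProduct.map (TensorProduct.lift ρ.act) (LinearMap.mul' k H)
        ∘ₗ (TensorProduct.tensorTensorTensorComm k M H H H).toLinearMap
        ∘ₗ TensorProduct.map ρ.coact Δ° := by
  ext m h
  exact ρ.compat m h

lemma coact_rTensor_coact (m : M) : ρ.coact.rTensor H (ρ.coact m)
    = (TensorProduct.assoc k M H H).symm ((Δ°).lTensor M (ρ.coact m)) := by
  rw [LinearEquiv.eq_symm_apply]
  simpa using LinearMap.congr_fun ρ.coact_coassoc m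

lemma comul_antipode_nat : TensorProduct.map ρ.coact Δ° ∘ₗ (𝒮).lTensor M
    = (antiTheta k H).lTensor (M ⊗[k] H) ∘ₗ TensorProduct.map ρ.coact Δ° := by
  ext m' h'
  have hc := LinearMap.congr_fun (comul_antipode_comp (k := k) (H := H)) h'
  simp only [LinearMap.comp_apply] at hc
  simp [hc]

/-- Key lemma: the image of `E_M` is coinvariant. -/
lemma coact_Emap (m : M) : ρ.coact (ρ.Emap m) = ρ.Emap m ⊗ₜ[k] 1 := by
  classical
  set μ := TensorProduct.lift ρ.act with hμ
  have hnat := LinearMap.congr_fun (comul_antipode_nat ρ) (ρ.coact m)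
  simp only [LinearMap.comp_apply] at hnat
  have e0 : ρ.coact (ρ.Emap m)
      = (TensorProduct.map μ (LinearMap.mul' k H))
          ((TensorProduct.tensorTensorTensorComm k M H H H)
            (((antiTheta k H).lTensor (M ⊗[k] H))
              (TensorProduct.map ρ.coact Δ° (ρ.coact m)))) := by
    have h1 : ρ.coact (ρ.Emap m)
        = (ρ.coact ∘ₗ μ) (((𝒮).lTensor M) (ρ.coact m)) := rfl
    rw [h1, compat_comp]
    simp only [LinearMap.comp_apply, LinearEquiv.coe_coe, hnat]
    rfl
  have e1 : TensorProduct.map ρ.coact Δ° (ρ.coact m)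
      = ((Δ°).lTensor (M ⊗[k] H))
          ((TensorProduct.assoc k M H H).symm ((Δ°).lTensor M (ρ.coact m))) := by
    conv_rhs => rw [← coact_rTensor_coact ρ m, ← LinearMap.comp_apply,
      LinearMap.lTensor_comp_rTensor]
  set W : M ⊗[k] (H ⊗[k] (H ⊗[k] H)) →ₗ[k] M ⊗[k] H :=
    TensorProduct.map μ (LinearMap.mul' k H)
      ∘ₗ (TensorProduct.tensorTensorTensorComm k M H H H).toLinearMap
      ∘ₗ (antiTheta k H).lTensor (M ⊗[k] H)
      ∘ₗ (TensorProduct.assoc k M H (H ⊗[k] H)).symm.toLinearMap with hW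
  have hΦ : TensorProduct.map μ (LinearMap.mul' k H)
        ∘ₗ (TensorProduct.tensorTensorTensorComm k M H H H).toLinearMap
        ∘ₗ (antiTheta k H).lTensor (M ⊗[k] H)
        ∘ₗ (Δ°).lTensor (M ⊗[k] H)
        ∘ₗ (TensorProduct.assoc k M H H).symm.toLinearMap
      = W ∘ₗ ((Δ°).lTensor H).lTensor M := by
    ext x y z
    simp [hW]
  have hco : (Δ°).lTensor H ∘ₗ Δ°
      = ((TensorProduct.assoc k H H H).toLinearMap ∘ₗ (Δ°).rTensor H) ∘ₗ Δ° := by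
    rw [LinearMap.comp_assoc]
    exact (Coalgebra.coassoc (R := k)).symm
  have hαβ : ((Δ°).lTensor H).lTensor M ((Δ°).lTensor M (ρ.coact m))
      = (((TensorProduct.assoc k H H H).toLinearMap ∘ₗ (Δ°).rTensor H).lTensor M)
          ((Δ°).lTensor M (ρ.coact m)) := by
    rw [← LinearMap.comp_apply, ← LinearMap.lTensor_comp,
      ← LinearMap.comp_apply (g := (Δ°).lTensor M), ← LinearMap.lTensor_comp, hco]
  have e2 := LinearMap.congr_fun hΦ ((Δ°).lTensor M (ρ.coact m))
  simp only [LinearMap.comp_apply, LinearEquiv.coe_coe] at e2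
  rw [e0, e1, e2, hαβ]
  obtain ⟨sf, hsf⟩ := TensorProduct.exists_finset (R := k) (ρ.coact m)
  have hEm : ρ.Emap m = ∑ p ∈ sf, ρ.act p.1 ((𝒮) p.2) := by
    simp only [Emap, LinearMap.comp_apply, hsf, map_sum, LinearMap.lTensor_tmul]
    exact Finset.sum_congr rfl fun p _ => by simp
  rw [hsf]
  simp only [map_sum, LinearMap.lTensor_tmul]
  have key : ∀ p : M × H, p ∈ sf →
      W (p.1 ⊗ₜ[k] (((TensorProduct.assoc k H H H).toLinearMap ∘ₗ (Δ°).rTensor H) ((Δ°) p.2)))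
        = ρ.act p.1 ((𝒮) p.2) ⊗ₜ[k] (1 : H) := by
    intro p _
    set r := ℛ k p.2 with hrr
    set f : (j : H × H) → Coalgebra.Repr k (r.left j) (H × H) := fun j => ℛ k (r.left j) with hf
    have hx : p.1 ⊗ₜ[k] (((TensorProduct.assoc k H H H).toLinearMap ∘ₗ (Δ°).rTensor H) ((Δ°) p.2))
        = ∑ j ∈ r.index, ∑ q ∈ (f j).index,
            p.1 ⊗ₜ[k] ((f j).left q ⊗ₜ[k] ((f j).right q ⊗ₜ[k] r.right j)) := by
      rw [← r.eq]
      simp only [map_sum, LinearMap.comp_apply, LinearMap.rTensor_tmul, LinearEquiv.coe_coe,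
        TensorProduct.tmul_sum]
      refine Finset.sum_congr rfl fun j _ => ?_
      rw [← (f j).eq, TensorProduct.sum_tmul, map_sum, TensorProduct.tmul_sum]
      exact Finset.sum_congr rfl fun q _ => by rw [TensorProduct.assoc_tmul]
    rw [hx]
    simp only [map_sum]
    have hterm : ∀ j ∈ r.index, ∀ q ∈ (f j).index,
        W (p.1 ⊗ₜ[k] ((f j).left q ⊗ₜ[k] ((f j).right q ⊗ₜ[k] r.right j)))
          = ρ.act p.1 ((𝒮) (r.right j)) ⊗ₜ[k] ((f j).left q * (𝒮) ((f j).right q)) := by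
      intro j _ q _
      simp [hW, hμ]
    calc ∑ j ∈ r.index, ∑ q ∈ (f j).index,
          W (p.1 ⊗ₜ[k] ((f j).left q ⊗ₜ[k] ((f j).right q ⊗ₜ[k] r.right j)))
        = ∑ j ∈ r.index, ρ.act p.1 ((𝒮) (r.right j)) ⊗ₜ[k]
            (∑ q ∈ (f j).index, (f j).left q * (𝒮) ((f j).right q)) := by
          refine Finset.sum_congr rfl fun j hj => ?_
          rw [TensorProduct.tmul_sum]
          exact Finset.sum_congr rfl fun q hq => hterm j hj q hq
      _ = ∑ j ∈ r.index,
            ρ.act p.1 ((𝒮) (Coalgebra.counit (R := k) (r.left j) • r.right j)) ⊗ₜ[k] (1 : H) := by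
          refine Finset.sum_congr rfl fun j _ => ?_
          rw [HopfAlgebra.sum_mul_antipode_eq_algebraMap_counit (f j), Algebra.algebraMap_eq_smul_one,
            TensorProduct.tmul_smul, map_smul, map_smul, ← TensorProduct.smul_tmul']
      _ = ρ.act p.1 ((𝒮) p.2) ⊗ₜ[k] (1 : H) := by
          rw [← TensorProduct.sum_tmul]
          congr 1
          rw [← map_sum, ← map_sum, repr_sum_counit_smul_right r]
  rw [Finset.sum_congr rfl key, ← TensorProduct.sum_tmul, ← hEm]

lemma Emap_mem_coinv (m : M) : ρ.Emap m ∈ ρ.coinv :=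
  (mem_coinv_iff ρ _).2 (coact_Emap ρ m)

lemma act_assoc_comp : TensorProduct.lift ρ.act ∘ₗ (TensorProduct.lift ρ.act).rTensor H
    = TensorProduct.lift ρ.act ∘ₗ (LinearMap.mul' k H).lTensor M
        ∘ₗ (TensorProduct.assoc k M H H).toLinearMap := by
  ext m g h
  simp [ρ.act_mul]

lemma lift_act_Emap_coact (m : M) :
    TensorProduct.lift ρ.act ((ρ.Emap).rTensor H (ρ.coact m)) = m := by
  classical
  have t1' : (ρ.Emap).rTensor H = (TensorProduct.lift ρ.act).rTensor H
      ∘ₗ (((𝒮).lTensor M).rTensor H) ∘ₗ (ρ.coact.rTensor H) := by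
    rw [← LinearMap.rTensor_comp, ← LinearMap.rTensor_comp]
    rfl
  have t1 := LinearMap.congr_fun t1' (ρ.coact m)
  simp only [LinearMap.comp_apply] at t1
  have t3 := LinearMap.congr_fun (act_assoc_comp ρ)
      ((((𝒮).lTensor M).rTensor H) (ρ.coact.rTensor H (ρ.coact m)))
  simp only [LinearMap.comp_apply, LinearEquiv.coe_coe] at t3
  rw [t1, t3]
  have t4 : ∀ w : M ⊗[k] (H ⊗[k] H),
      (LinearMap.mul' k H).lTensor M ((TensorProduct.assoc k M H H)
        ((((𝒮).lTensor M).rTensor H) ((TensorProduct.assoc k M H H).symm w)))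
      = ((LinearMap.mul' k H ∘ₗ (𝒮).rTensor H).lTensor M) w := by
    intro w
    have hmap : (LinearMap.mul' k H).lTensor M ∘ₗ (TensorProduct.assoc k M H H).toLinearMap
        ∘ₗ (((𝒮).lTensor M).rTensor H) ∘ₗ (TensorProduct.assoc k M H H).symm.toLinearMap
        = (LinearMap.mul' k H ∘ₗ (𝒮).rTensor H).lTensor M := by
      ext x y z
      simp
    have := LinearMap.congr_fun hmap w
    simpa using this
  rw [coact_rTensor_coact ρ m, t4,
    ← LinearMap.comp_apply (LinearMap.lTensor M (LinearMap.mul' k H ∘ₗ (𝒮).rTensor H)),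
    ← LinearMap.lTensor_comp, LinearMap.comp_assoc, HopfAlgebra.mul_antipode_rTensor_comul]
  obtain ⟨sf, hsf⟩ := TensorProduct.exists_finset (R := k) (ρ.coact m)
  have hc := ρ.coact_counit m
  rw [hsf] at hc ⊢
  simp only [map_sum, LinearMap.lTensor_tmul, TensorProduct.rid_tmul,
    LinearMap.comp_apply] at hc ⊢
  rw [← hc]
  refine Finset.sum_congr rfl fun p _ => ?_
  simp [Algebra.algebraMap_eq_smul_one, ρ.act_one]

lemma coact_act_coinv (v : M) (hv : ρ.coact v = v ⊗ₜ[k] 1) (h : H) (r : Coalgebra.Repr k h (H × H)) :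
    ρ.coact (ρ.act v h) = ∑ j ∈ r.index, ρ.act v (r.left j) ⊗ₜ[k] r.right j := by
  rw [ρ.compat v h, hv, ← r.eq]
  simp [TensorProduct.tmul_sum, one_mul]

lemma Emap_act_coinv (v : M) (hv : ρ.coact v = v ⊗ₜ[k] 1) (h : H) :
    ρ.Emap (ρ.act v h) = Coalgebra.counit (R := k) h • v := by
  set r := ℛ k h with hr
  have h1 := coact_act_coinv ρ v hv h r
  simp only [Emap, LinearMap.comp_apply, h1, map_sum, LinearMap.lTensor_tmul]
  have : ∀ j ∈ r.index,
      TensorProduct.lift ρ.act (ρ.act v (r.left j) ⊗ₜ[k] (𝒮) (r.right j))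
        = ρ.act v (r.left j * (𝒮) (r.right j)) := by
    intro j _
    simp [ρ.act_mul]
  rw [Finset.sum_congr rfl this, ← map_sum, HopfAlgebra.sum_mul_antipode_eq_algebraMap_counit r,
    Algebra.algebraMap_eq_smul_one, map_smul, ρ.act_one]

end RightHopfModule

end HM


/-- For a Hopf algebra `H` (with bijective antipode) and a right `H`-Hopf
module `M`, the map `M^co(H) ⊗ H → M`, `v ⊗ h ↦ v.h`, is a linear isomorphism, with inverse
`m ↦ E_M(m₍₀₎) ⊗ m₍₁₎` where `E_M(m) = m₍₀₎.S(m₍₁₎)`. -/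
theorem stmt1 (k : Type) [Field k] (H : Type) [Ring H] [HopfAlgebra k H]
    (hS : Function.Bijective (HopfAlgebra.antipode (R := k) (A := H)))
    (M : Type) [AddCommGroup M] [Module k M] (ρ : RightHopfModule k H M) :
    Function.Bijective
      (TensorProduct.lift (ρ.act ∘ₗ (RightHopfModule.coinv ρ).subtype))
    ∧ ∃ G : M →ₗ[k] (RightHopfModule.coinv ρ) ⊗[k] H,
        (TensorProduct.lift (ρ.act ∘ₗ (RightHopfModule.coinv ρ).subtype)) ∘ₗ G = LinearMap.id
        ∧ G ∘ₗ (TensorProduct.lift (ρ.act ∘ₗ (RightHopfModule.coinv ρ).subtype)) = LinearMap.id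
        ∧ ∀ m : M, (TensorProduct.map (RightHopfModule.coinv ρ).subtype LinearMap.id) (G m)
            = (TensorProduct.map (RightHopfModule.Emap ρ) LinearMap.id) (ρ.coact m) := by
  classical
  set F := TensorProduct.lift (ρ.act ∘ₗ (RightHopfModule.coinv ρ).subtype) with hF
  set E' : M →ₗ[k] ↥(RightHopfModule.coinv ρ) :=
    (RightHopfModule.Emap ρ).codRestrict _ (fun m => RightHopfModule.Emap_mem_coinv ρ m) with hE'
  set G : M →ₗ[k] ↥(RightHopfModule.coinv ρ) ⊗[k] H := E'.rTensor H ∘ₗ ρ.coact with hG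
  have hFE : F ∘ₗ E'.rTensor H
      = TensorProduct.lift ρ.act ∘ₗ (RightHopfModule.Emap ρ).rTensor H := by
    apply TensorProduct.ext'
    intro m h
    rw [LinearMap.comp_apply, LinearMap.comp_apply, LinearMap.rTensor_tmul,
      LinearMap.rTensor_tmul, hF, hE']
    simp
  have hFG : F ∘ₗ G = LinearMap.id := by
    apply LinearMap.ext
    intro m
    simp only [hG, LinearMap.comp_apply, LinearMap.id_apply]
    rw [← LinearMap.comp_apply F, hFE, LinearMap.comp_apply]
    exact RightHopfModule.lift_act_Emap_coact ρ m
  have hGF : G ∘ₗ F = LinearMap.id := by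
    ext v h
    have hv : ρ.coact ↑v = (↑v : M) ⊗ₜ[k] (1 : H) :=
      (RightHopfModule.mem_coinv_iff ρ _).1 v.2
    set r := ℛ k h with hr
    have h1 := RightHopfModule.coact_act_coinv ρ ↑v hv h r
    have hFvh : F (v ⊗ₜ[k] h) = ρ.act ↑v h := by
      rw [hF]
      exact TensorProduct.lift.tmul v h
    show G (F (v ⊗ₜ[k] h)) = v ⊗ₜ[k] h
    rw [hFvh, hG, LinearMap.comp_apply, h1, map_sum]
    have h2 : ∀ j ∈ r.index,
        (E'.rTensor H) (ρ.act (↑v) (r.left j) ⊗ₜ[k] r.right j)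
          = v ⊗ₜ[k] (Coalgebra.counit (R := k) (r.left j) • r.right j) := by
      intro j _
      have : E' (ρ.act (↑v) (r.left j))
          = Coalgebra.counit (R := k) (r.left j) • v := by
        apply Subtype.ext
        simp [hE', RightHopfModule.Emap_act_coinv ρ (↑v) hv (r.left j)]
      rw [LinearMap.rTensor_tmul, this, TensorProduct.smul_tmul]
    rw [Finset.sum_congr rfl h2, ← TensorProduct.tmul_sum, repr_sum_counit_smul_right r]
  have hthird : ∀ m : M,
      (TensorProduct.map (RightHopfModule.coinv ρ).subtype LinearMap.id) (G m)
      = (TensorProduct.map (RightHopfModule.Emap ρ) LinearMap.id) (ρ.coact m) := by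
    intro m
    have hcomp : TensorProduct.map (RightHopfModule.coinv ρ).subtype LinearMap.id ∘ₗ E'.rTensor H
        = TensorProduct.map (RightHopfModule.Emap ρ) LinearMap.id := by
      rw [show TensorProduct.map (RightHopfModule.coinv ρ).subtype LinearMap.id
          = (RightHopfModule.coinv ρ).subtype.rTensor H from rfl,
        show TensorProduct.map (RightHopfModule.Emap ρ) LinearMap.id
          = (RightHopfModule.Emap ρ).rTensor H from rfl,
        ← LinearMap.rTensor_comp, hE', LinearMap.subtype_comp_codRestrict]
    rw [hG, LinearMap.comp_apply]
    have := LinearMap.congr_fun hcomp (ρ.coact m)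
    simp only [LinearMap.comp_apply] at this
    exact this
  exact ⟨Function.bijective_iff_has_inverse.mpr
      ⟨G, fun x => LinearMap.congr_fun hGF x, fun x => LinearMap.congr_fun hFG x⟩,
    G, hFG, hGF, hthird⟩
end

section
/- For a right H-Hopf module M, the map M → (M/MH⁺) ⊗ H given by m ↦ overline(m_(0)) ⊗ m_(1) is a linear isomorphism, where H⁺ is the augmentation ideal (kernel of the counit) and overline denotes the quotient map M → M/MH⁺. -/
open TensorProduct

namespace HopfAux
open TensorProduct Coalgebra


variable {k : Type*} [CommSemiring k]

section Conv
variable {C A : Type*} [AddCommMonoid C] [Module k C] [Coalgebra k C]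
  [Semiring A] [Algebra k A]

/-- Convolution product. -/
noncomputable def conv (f g : C →ₗ[k] A) : C →ₗ[k] A :=
  LinearMap.mul' k A ∘ₗ TensorProduct.map f g ∘ₗ Coalgebra.comul

/-- Convolution unit. -/
noncomputable def convUnit : C →ₗ[k] A :=
  Algebra.linearMap k A ∘ₗ Coalgebra.counit

lemma conv_apply (f g : C →ₗ[k] A) (a : C) {ι : Type*} (r : Coalgebra.Repr k a ι) :
    conv f g a = ∑ i ∈ r.index, f (r.left i) * g (r.right i) := by
  simp only [conv, LinearMap.comp_apply, ← r.eq, map_sum, TensorProduct.map_tmul,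
    LinearMap.mul'_apply]

lemma sum_counit_smul (a : C) {ι : Type*} (r : Coalgebra.Repr k a ι) :
    ∑ i ∈ r.index, Coalgebra.counit (R := k) (r.left i) • r.right i = a := by
  have := congrArg (TensorProduct.lid k C) (sum_counit_tmul_eq r)
  simp only [map_sum, TensorProduct.lid_tmul, one_smul] at this
  exact this

lemma sum_smul_counit (a : C) {ι : Type*} (r : Coalgebra.Repr k a ι) :
    ∑ i ∈ r.index, Coalgebra.counit (R := k) (r.right i) • r.left i = a := by
  have := congrArg (TensorProduct.rid k C) (sum_tmul_counit_eq r)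
  simp only [map_sum, TensorProduct.rid_tmul, one_smul] at this
  exact this

lemma conv_unit_left (f : C →ₗ[k] A) : conv convUnit f = f := by
  ext a
  let r := ℛ k a
  rw [conv_apply _ _ a r]
  simp only [convUnit, LinearMap.comp_apply, Algebra.linearMap_apply]
  calc ∑ i ∈ r.index, algebraMap k A (Coalgebra.counit (r.left i)) * f (r.right i)
      = ∑ i ∈ r.index, Coalgebra.counit (R := k) (r.left i) • f (r.right i) := by
        simp [Algebra.smul_def]
    _ = f a := by
        conv_rhs => rw [← sum_counit_smul a r]
        simp [map_sum]

lemma conv_unit_right (f : C →ₗ[k] A) : conv f convUnit = f := by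
  ext a
  let r := ℛ k a
  rw [conv_apply _ _ a r]
  simp only [convUnit, LinearMap.comp_apply, Algebra.linearMap_apply]
  calc ∑ i ∈ r.index, f (r.left i) * algebraMap k A (Coalgebra.counit (r.right i))
      = ∑ i ∈ r.index, Coalgebra.counit (R := k) (r.right i) • f (r.left i) := by
        simp [Algebra.smul_def, Algebra.commutes, mul_comm]
    _ = f a := by
        conv_rhs => rw [← sum_smul_counit a r]
        simp [map_sum]

lemma conv_assoc (f g h : C →ₗ[k] A) : conv (conv f g) h = conv f (conv g h) := by
  ext a
  let r := ℛ k a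
  let a₁ : (i : r.ι) → Coalgebra.Repr k (r.left i) (C × C) := fun i => ℛ k (r.left i)
  let a₂ : (i : r.ι) → Coalgebra.Repr k (r.right i) (C × C) := fun i => ℛ k (r.right i)
  have key := sum_map_tmul_tmul_eq (R := k) f g h a (repr := r) (a₁ := a₁) (a₂ := a₂)
  have key2 := congrArg (LinearMap.mul' k A ∘ₗ (LinearMap.mul' k A).lTensor A) key
  simp only [map_sum, LinearMap.comp_apply, LinearMap.lTensor_tmul, LinearMap.mul'_apply] at key2
  rw [conv_apply _ _ a r, conv_apply _ _ a r]
  calc ∑ i ∈ r.index, conv f g (r.left i) * h (r.right i)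
      = ∑ i ∈ r.index, ∑ j ∈ (a₁ i).index,
          f ((a₁ i).left j) * (g ((a₁ i).right j) * h (r.right i)) := by
        refine Finset.sum_congr rfl fun i _ => ?_
        rw [conv_apply _ _ _ (a₁ i), Finset.sum_mul]
        simp [mul_assoc]
    _ = ∑ i ∈ r.index, f (r.left i) * conv g h (r.right i) := by
        rw [← key2]
        refine Finset.sum_congr rfl fun i _ => ?_
        rw [conv_apply _ _ _ (a₂ i), Finset.mul_sum]

lemma conv_cancel (f m g : C →ₗ[k] A) (h1 : conv f m = convUnit)
    (h2 : conv m g = convUnit) : f = g := by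
  have : conv f (conv m g) = conv (conv f m) g := (conv_assoc f m g).symm
  rw [h1, h2, conv_unit_right, conv_unit_left] at this
  exact this

end Conv


section Antipode
variable {k H : Type} [CommRing k] [Ring H] [HopfAlgebra k H]

local notation "S" => HopfAlgebra.antipode (R := k) (A := H)
local notation "ε" => Coalgebra.counit (R := k)
local notation "Δ" => Coalgebra.comul (R := k)

lemma antipode_one : S (1 : H) = 1 := by
  have := HopfAlgebra.mul_antipode_rTensor_comul_apply (R := k) (A := H) (1 : H)
  rw [Bialgebra.comul_one, Algebra.TensorProduct.one_def] at this
  simpa using this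

lemma counit_antipode (a : H) : ε (S a) = ε a := by
  let r := ℛ k a
  conv_lhs => rw [← sum_smul_counit a r]
  rw [map_sum, map_sum]
  calc ∑ i ∈ r.index, ε (S ((ε (r.right i) : k) • r.left i))
      = ε (∑ i ∈ r.index, S (r.left i) * r.right i) := by
        rw [map_sum]
        refine Finset.sum_congr rfl fun i _ => ?_
        rw [map_smul, map_smul, Bialgebra.counit_mul, smul_eq_mul, mul_comm]
    _ = ε a := by rw [HopfAlgebra.sum_antipode_mul_eq_algebraMap_counit r, Bialgebra.counit_algebraMap]

/-- comultiplication of a pure tensor in the tensor-product coalgebra -/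
lemma comul_tmul (a b : H) {ι κ : Type*} (ra : Coalgebra.Repr k a ι) (rb : Coalgebra.Repr k b κ) :
    Δ (a ⊗ₜ[k] b) = ∑ i ∈ ra.index, ∑ j ∈ rb.index,
      (ra.left i ⊗ₜ[k] rb.left j) ⊗ₜ[k] (ra.right i ⊗ₜ[k] rb.right j) := by
  have hdef : (Coalgebra.comul (R := k) (A := H ⊗[k] H)) =
      (TensorProduct.tensorTensorTensorComm k H H H H).toLinearMap ∘ₗ
        TensorProduct.map Coalgebra.comul Coalgebra.comul := rfl
  rw [hdef, LinearMap.comp_apply, TensorProduct.map_tmul, ← ra.eq, ← rb.eq]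
  rw [TensorProduct.sum_tmul]
  rw [map_sum]
  refine Finset.sum_congr rfl fun i _ => ?_
  rw [TensorProduct.tmul_sum, map_sum]
  refine Finset.sum_congr rfl fun j _ => ?_
  simp [TensorProduct.tensorTensorTensorComm_tmul]

lemma counit_tmul (a b : H) : (Coalgebra.counit (a ⊗ₜ[k] b) : k) = ε a * ε b := by
  rw [TensorProduct.counit_tmul, smul_eq_mul, mul_comm]

lemma antipode_mul (a b : H) : S (a * b) = S b * S a := by
  have key : (S ∘ₗ LinearMap.mul' k H) =
      (LinearMap.mul' k H ∘ₗ TensorProduct.map S S ∘ₗ (TensorProduct.comm k H H).toLinearMap) := by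
    apply conv_cancel _ (LinearMap.mul' k H)
    · -- conv (S∘μ) μ = unit
      apply TensorProduct.ext'
      intro a b
      let ra := ℛ k a; let rb := ℛ k b
      have hkey : ∑ i ∈ ra.index, ∑ j ∈ rb.index,
          (ra.left i * rb.left j) ⊗ₜ[k] (ra.right i * rb.right j) = Δ (a * b) := by
        rw [Bialgebra.comul_mul, ← ra.eq, ← rb.eq, Finset.sum_mul_sum]
        simp [Algebra.TensorProduct.tmul_mul_tmul]
      have : conv (S ∘ₗ LinearMap.mul' k H) (LinearMap.mul' k H) (a ⊗ₜ[k] b)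
          = LinearMap.mul' k H ((LinearMap.rTensor H S) (Δ (a * b))) := by
        rw [← hkey]
        simp only [conv, LinearMap.comp_apply, comul_tmul a b ra rb, map_sum,
          TensorProduct.map_tmul, LinearMap.mul'_apply, LinearMap.rTensor_tmul]
      rw [this, HopfAlgebra.mul_antipode_rTensor_comul_apply]
      show _ = (Algebra.linearMap k H ∘ₗ Coalgebra.counit) (a ⊗ₜ[k] b)
      rw [LinearMap.comp_apply, counit_tmul, Bialgebra.counit_mul, Algebra.linearMap_apply]
    · -- conv μ (μ∘(S⊗S)∘comm) = unit
      apply TensorProduct.ext'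
      intro a b
      let ra := ℛ k a; let rb := ℛ k b
      have : conv (LinearMap.mul' k H)
          (LinearMap.mul' k H ∘ₗ TensorProduct.map S S ∘ₗ (TensorProduct.comm k H H).toLinearMap)
          (a ⊗ₜ[k] b)
          = ∑ i ∈ ra.index, ∑ j ∈ rb.index,
            (ra.left i * rb.left j) * (S (rb.right j) * S (ra.right i)) := by
        simp only [conv, LinearMap.comp_apply, comul_tmul a b ra rb, map_sum,
          TensorProduct.map_tmul, LinearMap.mul'_apply, LinearEquiv.coe_coe,
          TensorProduct.comm_tmul]
      rw [this]
      have step : ∀ i ∈ ra.index, ∑ j ∈ rb.index,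
          (ra.left i * rb.left j) * (S (rb.right j) * S (ra.right i))
          = ε b • (ra.left i * S (ra.right i)) := by
        intro i _
        have : ∑ j ∈ rb.index, (ra.left i * rb.left j) * (S (rb.right j) * S (ra.right i))
            = ra.left i * ((∑ j ∈ rb.index, rb.left j * S (rb.right j)) * S (ra.right i)) := by
          rw [Finset.sum_mul, Finset.mul_sum]
          refine Finset.sum_congr rfl fun j _ => ?_
          simp [mul_assoc]
        rw [this, HopfAlgebra.sum_mul_antipode_eq_algebraMap_counit rb, Algebra.algebraMap_eq_smul_one,
          smul_mul_assoc, one_mul, mul_smul_comm]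
      rw [Finset.sum_congr rfl step, ← Finset.smul_sum, HopfAlgebra.sum_mul_antipode_eq_algebraMap_counit ra]
      show _ = (Algebra.linearMap k H ∘ₗ Coalgebra.counit) (a ⊗ₜ[k] b)
      rw [LinearMap.comp_apply, counit_tmul, Algebra.linearMap_apply]
      rw [Algebra.smul_def, ← map_mul, mul_comm]
  have := congrArg (fun f => f (a ⊗ₜ[k] b)) key
  simpa using this

lemma comul_antipode_map : (Coalgebra.comul ∘ₗ S : H →ₗ[k] H ⊗[k] H) =
    ((TensorProduct.comm k H H).toLinearMap ∘ₗ TensorProduct.map S S ∘ₗ Coalgebra.comul) := by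
    apply conv_cancel _ (Coalgebra.comul (R := k) (A := H))
    · -- conv (Δ∘S) Δ = unit
      apply LinearMap.ext
      intro a
      let r := ℛ k a
      rw [conv_apply _ _ a r]
      calc ∑ i ∈ r.index, (Coalgebra.comul ∘ₗ S) (r.left i) * Coalgebra.comul (r.right i)
          = Coalgebra.comul (R := k) (∑ i ∈ r.index, S (r.left i) * r.right i) := by
            rw [map_sum]
            exact Finset.sum_congr rfl fun i _ => (Bialgebra.comul_mul _ _).symm
        _ = convUnit a := by
            rw [HopfAlgebra.sum_antipode_mul_eq_algebraMap_counit r, Bialgebra.comul_algebraMap]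
            rfl
    · -- conv Δ (comm∘(S⊗S)∘Δ) = unit
      apply LinearMap.ext
      intro a
      let r := ℛ k a
      let a₁ : (i : r.ι) → Coalgebra.Repr k (r.left i) (H × H) := fun i => ℛ k (r.left i)
      let a₂ : (i : r.ι) → Coalgebra.Repr k (r.right i) (H × H) := fun i => ℛ k (r.right i)
      set X : H ⊗[k] (H ⊗[k] H) →ₗ[k] H ⊗[k] H :=
        LinearMap.mul' k (H ⊗[k] H) ∘ₗ TensorProduct.map Coalgebra.comul
          ((TensorProduct.comm k H H).toLinearMap ∘ₗ TensorProduct.map S S) with hX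
      have key := congrArg X (sum_tmul_tmul_eq r a₁ a₂)
      simp only [map_sum, hX, LinearMap.comp_apply, TensorProduct.map_tmul,
        LinearEquiv.coe_coe, TensorProduct.comm_tmul, LinearMap.mul'_apply] at key
      -- key : ∑ i ∑ j, Δ((a₁ i).left j) * (S (r.right i) ⊗ₜ S ((a₁ i).right j))
      --     = ∑ i ∑ j, Δ(r.left i) * (S ((a₂ i).right j) ⊗ₜ S ((a₂ i).left j))
      have hRHS : conv (Coalgebra.comul (R := k) (A := H))
          ((TensorProduct.comm k H H).toLinearMap ∘ₗ TensorProduct.map S S ∘ₗ Coalgebra.comul) a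
          = ∑ i ∈ r.index, ∑ j ∈ (a₂ i).index,
            Coalgebra.comul (r.left i) *
              (S ((a₂ i).right j) ⊗ₜ[k] S ((a₂ i).left j)) := by
        rw [conv_apply _ _ a r]
        refine Finset.sum_congr rfl fun i _ => ?_
        rw [LinearMap.comp_apply, LinearMap.comp_apply, ← (a₂ i).eq]
        rw [map_sum, map_sum, Finset.mul_sum]
        simp [TensorProduct.comm_tmul]
      rw [hRHS, ← key]
      -- now compute the LHS of key
      have step : ∀ i ∈ r.index, ∑ j ∈ (a₁ i).index,
          Coalgebra.comul ((a₁ i).left j) * (S (r.right i) ⊗ₜ[k] S ((a₁ i).right j))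
          = (r.left i * S (r.right i)) ⊗ₜ[k] (1 : H) := by
        intro i _
        let b : (j : (a₁ i).ι) → Coalgebra.Repr k ((a₁ i).left j) (H × H) :=
          fun j => ℛ k ((a₁ i).left j)
        let c : (j : (a₁ i).ι) → Coalgebra.Repr k ((a₁ i).right j) (H × H) :=
          fun j => ℛ k ((a₁ i).right j)
        set Λ : H ⊗[k] (H ⊗[k] H) →ₗ[k] H ⊗[k] H :=
          TensorProduct.map (LinearMap.mulRight k (S (r.right i)))
            (LinearMap.mul' k H ∘ₗ LinearMap.lTensor H S) with hΛ
        have key2 := congrArg Λ (sum_tmul_tmul_eq (a₁ i) b c)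
        simp only [map_sum, hΛ, TensorProduct.map_tmul, LinearMap.comp_apply,
          LinearMap.lTensor_tmul, LinearMap.mul'_apply, LinearMap.mulRight_apply] at key2
        -- key2 : ∑ j ∑ l, ((b j).left l * S (r.right i)) ⊗ₜ ((b j).right l * S ((a₁ i).right j))
        --      = ∑ j ∑ l, ((a₁ i).left j * S (r.right i)) ⊗ₜ ((c j).left l * S ((c j).right l))
        calc ∑ j ∈ (a₁ i).index,
              Coalgebra.comul ((a₁ i).left j) * (S (r.right i) ⊗ₜ[k] S ((a₁ i).right j))
            = ∑ j ∈ (a₁ i).index, ∑ l ∈ (b j).index,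
              ((b j).left l * S (r.right i)) ⊗ₜ[k] ((b j).right l * S ((a₁ i).right j)) := by
              refine Finset.sum_congr rfl fun j _ => ?_
              rw [← (b j).eq, Finset.sum_mul]
              exact Finset.sum_congr rfl fun l _ => Algebra.TensorProduct.tmul_mul_tmul _ _ _ _
          _ = ∑ j ∈ (a₁ i).index, ∑ l ∈ (c j).index,
              ((a₁ i).left j * S (r.right i)) ⊗ₜ[k] ((c j).left l * S ((c j).right l)) := key2
          _ = ∑ j ∈ (a₁ i).index,
              (((Coalgebra.counit ((a₁ i).right j) : k) • (a₁ i).left j) * S (r.right i))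
                ⊗ₜ[k] (1 : H) := by
              refine Finset.sum_congr rfl fun j _ => ?_
              rw [← TensorProduct.tmul_sum, HopfAlgebra.sum_mul_antipode_eq_algebraMap_counit (c j),
                Algebra.algebraMap_eq_smul_one, TensorProduct.tmul_smul,
                TensorProduct.smul_tmul', smul_mul_assoc]
          _ = (r.left i * S (r.right i)) ⊗ₜ[k] (1 : H) := by
              rw [← TensorProduct.sum_tmul, ← Finset.sum_mul, sum_smul_counit _ (a₁ i)]
      rw [Finset.sum_congr rfl step, ← TensorProduct.sum_tmul,
        HopfAlgebra.sum_mul_antipode_eq_algebraMap_counit r]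
      show _ = (Algebra.linearMap k (H ⊗[k] H) ∘ₗ Coalgebra.counit) a
      rw [LinearMap.comp_apply, Algebra.linearMap_apply, Algebra.TensorProduct.algebraMap_apply]

end Antipode

section Module
variable {k H M : Type} [Field k] [Ring H] [HopfAlgebra k H]
  [AddCommGroup M] [Module k M] (ρ : RightHopfModule k H M)

local notation "S" => HopfAlgebra.antipode (R := k) (A := H)
local notation "ε" => Coalgebra.counit (R := k) (A := H)
local notation "Δ" => Coalgebra.comul (R := k) (A := H)

open RightHopfModule

lemma Emap_apply (m : M) : ρ.Emap m =
    TensorProduct.lift ρ.act ((LinearMap.lTensor M S) (ρ.coact m)) := rfl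

lemma coact_act_sum (m : M) (h : H) {s : Finset (M × H)}
    (hs : ρ.coact m = ∑ p ∈ s, p.1 ⊗ₜ[k] p.2) {ι : Type*} (rh : Coalgebra.Repr k h ι) :
    ρ.coact (ρ.act m h) = ∑ p ∈ s, ∑ j ∈ rh.index,
      ρ.act p.1 (rh.left j) ⊗ₜ[k] (p.2 * rh.right j) := by
  rw [ρ.compat m h, hs, ← rh.eq]
  rw [TensorProduct.sum_tmul, map_sum, map_sum]
  refine Finset.sum_congr rfl fun p _ => ?_
  rw [TensorProduct.tmul_sum, map_sum, map_sum]
  refine Finset.sum_congr rfl fun j _ => ?_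
  simp [TensorProduct.tensorTensorTensorComm_tmul]

/-- `E(m·h) = ε(h) • E(m)`. -/
lemma Emap_act (m : M) (h : H) : ρ.Emap (ρ.act m h) = ε h • ρ.Emap m := by
  obtain ⟨s, hs⟩ := TensorProduct.exists_finset (ρ.coact m)
  let rh := ℛ k h
  rw [Emap_apply, coact_act_sum ρ m h hs rh]
  rw [map_sum, map_sum]
  have hterm : ∀ p ∈ s, (TensorProduct.lift ρ.act) ((LinearMap.lTensor M S)
      (∑ j ∈ rh.index, ρ.act p.1 (rh.left j) ⊗ₜ[k] (p.2 * rh.right j)))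
      = (ε h) • ρ.act p.1 (S p.2) := by
    intro p _
    rw [map_sum, map_sum]
    calc ∑ j ∈ rh.index, (TensorProduct.lift ρ.act) ((LinearMap.lTensor M S)
          (ρ.act p.1 (rh.left j) ⊗ₜ[k] (p.2 * rh.right j)))
        = ∑ j ∈ rh.index, ρ.act p.1 ((rh.left j * S (rh.right j)) * S p.2) := by
          refine Finset.sum_congr rfl fun j _ => ?_
          rw [LinearMap.lTensor_tmul, TensorProduct.lift.tmul, ρ.act_mul,
            antipode_mul, mul_assoc]
      _ = ρ.act p.1 ((∑ j ∈ rh.index, rh.left j * S (rh.right j)) * S p.2) := by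
          rw [Finset.sum_mul, map_sum]
      _ = (ε h) • ρ.act p.1 (S p.2) := by
          rw [HopfAlgebra.sum_mul_antipode_eq_algebraMap_counit rh, Algebra.algebraMap_eq_smul_one,
            smul_mul_assoc, one_mul, map_smul]
  rw [Finset.sum_congr rfl hterm, ← Finset.smul_sum]
  congr 1
  rw [Emap_apply, hs, map_sum, map_sum]
  refine Finset.sum_congr rfl fun p _ => ?_
  rw [LinearMap.lTensor_tmul, TensorProduct.lift.tmul]

lemma coact_counit_sum (m : M) {s : Finset (M × H)}
    (hs : ρ.coact m = ∑ p ∈ s, p.1 ⊗ₜ[k] p.2) :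
    ∑ p ∈ s, (ε p.2 : k) • p.1 = m := by
  have := ρ.coact_counit m
  rw [hs] at this
  simpa [map_sum, TensorProduct.rid_tmul] using this

/-- `m - E(m) ∈ M·H⁺`. -/
lemma sub_Emap_mem (m : M) : m - ρ.Emap m ∈ MHplus ρ := by
  obtain ⟨s, hs⟩ := TensorProduct.exists_finset (ρ.coact m)
  have hm : m - ρ.Emap m = ∑ p ∈ s, ρ.act p.1 ((ε p.2 : k) • 1 - S p.2) := by
    have h1 : ρ.Emap m = ∑ p ∈ s, ρ.act p.1 (S p.2) := by
      rw [Emap_apply, hs, map_sum, map_sum]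
      exact Finset.sum_congr rfl fun p _ => by
        rw [LinearMap.lTensor_tmul, TensorProduct.lift.tmul]
    rw [h1, ← coact_counit_sum ρ m hs, ← Finset.sum_sub_distrib]
    refine Finset.sum_congr rfl fun p _ => ?_
    rw [map_sub, map_smul, ρ.act_one]
  rw [hm]
  refine Submodule.sum_mem _ fun p _ => Submodule.subset_span ?_
  refine ⟨p.1, (ε p.2 : k) • 1 - S p.2, ?_, rfl⟩
  rw [map_sub, map_smul, Bialgebra.counit_one, counit_antipode, smul_eq_mul, mul_one, sub_self]

/-- The key 3-fold Sweedler contraction map. -/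
noncomputable def Tmap : M ⊗[k] (H ⊗[k] H) →ₗ[k] M ⊗[k] H :=
  TensorProduct.map (TensorProduct.lift ρ.act) (LinearMap.mul' k H)
    ∘ₗ (TensorProduct.tensorTensorTensorComm k M H H H).toLinearMap
    ∘ₗ LinearMap.lTensor (M ⊗[k] H)
        ((TensorProduct.comm k H H).toLinearMap ∘ₗ TensorProduct.map S S ∘ₗ Δ)
    ∘ₗ (TensorProduct.assoc k M H H).symm.toLinearMap

lemma Tmap_assoc_coact (x : M) (h : H) :
    Tmap ρ ((TensorProduct.assoc k M H H) (ρ.coact x ⊗ₜ[k] h)) =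
      ρ.coact (ρ.act x (S h)) := by
  have h1 : ((TensorProduct.assoc k M H H).symm.toLinearMap :
        M ⊗[k] (H ⊗[k] H) →ₗ[k] (M ⊗[k] H) ⊗[k] H)
      ((TensorProduct.assoc k M H H) (ρ.coact x ⊗ₜ[k] h)) = ρ.coact x ⊗ₜ[k] h :=
    (TensorProduct.assoc k M H H).symm_apply_apply _
  rw [Tmap, LinearMap.comp_apply, LinearMap.comp_apply, LinearMap.comp_apply, h1,
    LinearMap.lTensor_tmul]
  have h2 : ((TensorProduct.comm k H H).toLinearMap ∘ₗ TensorProduct.map S S ∘ₗ Δ) h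
      = Δ (S h) := by
    rw [← comul_antipode_map]
    rfl
  rw [h2, ρ.compat x (S h)]

lemma Tmap_comul (x : M) (h : H) :
    Tmap ρ (x ⊗ₜ[k] Δ h) = ρ.act x (S h) ⊗ₜ[k] (1 : H) := by
  let r := ℛ k h
  let a₁ : (i : r.ι) → Coalgebra.Repr k (r.left i) (H × H) := fun i => ℛ k (r.left i)
  let a₂ : (i : r.ι) → Coalgebra.Repr k (r.right i) (H × H) := fun i => ℛ k (r.right i)
  set Ψx : H ⊗[k] (H ⊗[k] H) →ₗ[k] M ⊗[k] H :=
    (TensorProduct.comm k H M).toLinearMap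
      ∘ₗ TensorProduct.map (LinearMap.mul' k H ∘ₗ LinearMap.lTensor H S) (ρ.act x ∘ₗ S)
      ∘ₗ (TensorProduct.assoc k H H H).symm.toLinearMap with hΨ
  have key := congrArg Ψx (Coalgebra.sum_tmul_tmul_eq r a₁ a₂)
  simp only [map_sum, hΨ, LinearMap.comp_apply, LinearEquiv.coe_coe,
    TensorProduct.assoc_symm_tmul, TensorProduct.map_tmul, LinearMap.lTensor_tmul,
    LinearMap.mul'_apply, TensorProduct.comm_tmul] at key
  -- key LHS: ∑ i ∑ j, act x (S (r.right i)) ⊗ₜ ((a₁ i).left j * S ((a₁ i).right j))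
  -- key RHS: ∑ i ∑ j, act x (S ((a₂ i).right j)) ⊗ₜ (r.left i * S ((a₂ i).left j))
  have hT : Tmap ρ (x ⊗ₜ[k] Δ h) = ∑ i ∈ r.index, ∑ j ∈ (a₂ i).index,
      ρ.act x (S ((a₂ i).right j)) ⊗ₜ[k] (r.left i * S ((a₂ i).left j)) := by
    conv_lhs => rw [← r.eq]
    rw [TensorProduct.tmul_sum, map_sum]
    refine Finset.sum_congr rfl fun i _ => ?_
    rw [Tmap, LinearMap.comp_apply, LinearMap.comp_apply, LinearMap.comp_apply]
    rw [show ((TensorProduct.assoc k M H H).symm.toLinearMap :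
        M ⊗[k] (H ⊗[k] H) →ₗ[k] (M ⊗[k] H) ⊗[k] H)
        (x ⊗ₜ[k] (r.left i ⊗ₜ[k] r.right i)) = (x ⊗ₜ[k] r.left i) ⊗ₜ[k] r.right i from
      TensorProduct.assoc_symm_tmul _ _ _]
    rw [LinearMap.lTensor_tmul]
    rw [show ((TensorProduct.comm k H H).toLinearMap ∘ₗ TensorProduct.map S S ∘ₗ Δ)
        (r.right i) = ∑ j ∈ (a₂ i).index,
          S ((a₂ i).right j) ⊗ₜ[k] S ((a₂ i).left j) from by
      rw [LinearMap.comp_apply, LinearMap.comp_apply, ← (a₂ i).eq, map_sum, map_sum]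
      simp]
    rw [TensorProduct.tmul_sum, map_sum, map_sum]
    refine Finset.sum_congr rfl fun j _ => ?_
    simp [TensorProduct.tensorTensorTensorComm_tmul]
  rw [hT, ← key]
  calc ∑ i ∈ r.index, ∑ j ∈ (a₁ i).index,
        ρ.act x (S (r.right i)) ⊗ₜ[k] ((a₁ i).left j * S ((a₁ i).right j))
      = ∑ i ∈ r.index,
        ρ.act x (S ((Coalgebra.counit (r.left i) : k) • r.right i)) ⊗ₜ[k] (1 : H) := by
        refine Finset.sum_congr rfl fun i _ => ?_
        rw [← TensorProduct.tmul_sum, HopfAlgebra.sum_mul_antipode_eq_algebraMap_counit (a₁ i),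
          Algebra.algebraMap_eq_smul_one, TensorProduct.tmul_smul,
          TensorProduct.smul_tmul', ← map_smul, ← map_smul]
    _ = ρ.act x (S h) ⊗ₜ[k] (1 : H) := by
        rw [← TensorProduct.sum_tmul, ← map_sum, ← map_sum, sum_counit_smul h r]

/-- `E` is a coinvariant: `ρ(E m) = E m ⊗ 1`. -/
lemma coact_Emap (m : M) : ρ.coact (ρ.Emap m) = ρ.Emap m ⊗ₜ[k] (1 : H) := by
  obtain ⟨s, hs⟩ := TensorProduct.exists_finset (ρ.coact m)
  have hE : ρ.Emap m = ∑ p ∈ s, ρ.act p.1 (S p.2) := by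
    rw [Emap_apply, hs, map_sum, map_sum]
    exact Finset.sum_congr rfl fun p _ => by
      rw [LinearMap.lTensor_tmul, TensorProduct.lift.tmul]
  have hco := LinearMap.congr_fun ρ.coact_coassoc m
  simp only [LinearMap.comp_apply, LinearEquiv.coe_coe] at hco
  -- hco : assoc ((coact.rTensor H) (coact m)) = (LinearMap.lTensor M Δ) (coact m)
  have hA : ρ.coact (ρ.Emap m) = Tmap ρ ((LinearMap.lTensor M Δ) (ρ.coact m)) := by
    rw [← hco, hE, map_sum]
    have : (ρ.coact.rTensor H) (ρ.coact m) = ∑ p ∈ s, ρ.coact p.1 ⊗ₜ[k] p.2 := by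
      rw [hs, map_sum]; simp
    rw [this, map_sum, map_sum]
    exact Finset.sum_congr rfl fun p _ => (Tmap_assoc_coact ρ p.1 p.2).symm
  rw [hA, hs, map_sum, map_sum]
  calc ∑ p ∈ s, Tmap ρ ((LinearMap.lTensor M Δ) (p.1 ⊗ₜ[k] p.2))
      = ∑ p ∈ s, ρ.act p.1 (S p.2) ⊗ₜ[k] (1 : H) := by
        refine Finset.sum_congr rfl fun p _ => ?_
        rw [LinearMap.lTensor_tmul, Tmap_comul]
    _ = ρ.Emap m ⊗ₜ[k] (1 : H) := by rw [← TensorProduct.sum_tmul, hE]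

/-- `m₍₀₎ · E(m₍₁₎)`-style contraction: `∑ (E m₍₀₎)·m₍₁₎ = m`. -/
lemma lift_Emap_coact (m : M) :
    TensorProduct.lift ρ.act ((LinearMap.rTensor H ρ.Emap) (ρ.coact m)) = m := by
  obtain ⟨s, hs⟩ := TensorProduct.exists_finset (ρ.coact m)
  set D : M ⊗[k] (H ⊗[k] H) →ₗ[k] M :=
    TensorProduct.lift ρ.act
      ∘ₗ LinearMap.lTensor M (LinearMap.mul' k H ∘ₗ LinearMap.rTensor H S) with hD
  have hco := LinearMap.congr_fun ρ.coact_coassoc m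
  simp only [LinearMap.comp_apply, LinearEquiv.coe_coe] at hco
  have step1 : TensorProduct.lift ρ.act ((LinearMap.rTensor H ρ.Emap) (ρ.coact m))
      = D ((TensorProduct.assoc k M H H) ((ρ.coact.rTensor H) (ρ.coact m))) := by
    rw [hs]
    simp only [map_sum]
    refine Finset.sum_congr rfl fun p _ => ?_
    obtain ⟨t, ht⟩ := TensorProduct.exists_finset (ρ.coact p.1)
    have hterm : ∀ q ∈ t, (D ((TensorProduct.assoc k M H H) ((q.1 ⊗ₜ[k] q.2) ⊗ₜ[k] p.2)))
        = ρ.act (ρ.act q.1 (S q.2)) p.2 := by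
      intro q _
      rw [TensorProduct.assoc_tmul, hD, LinearMap.comp_apply, LinearMap.lTensor_tmul,
        LinearMap.comp_apply, LinearMap.rTensor_tmul, LinearMap.mul'_apply,
        TensorProduct.lift.tmul, ρ.act_mul]
    have hE1 : ρ.Emap p.1 = ∑ q ∈ t, ρ.act q.1 (S q.2) := by
      rw [Emap_apply, ht, map_sum, map_sum]
      exact Finset.sum_congr rfl fun q _ => by
        rw [LinearMap.lTensor_tmul, TensorProduct.lift.tmul]
    rw [LinearMap.rTensor_tmul, LinearMap.rTensor_tmul, TensorProduct.lift.tmul, ht,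
      TensorProduct.sum_tmul, map_sum, map_sum, Finset.sum_congr rfl hterm, hE1, map_sum,
      LinearMap.sum_apply]
  rw [step1, hco, hs, map_sum, map_sum]
  calc ∑ p ∈ s, D ((LinearMap.lTensor M Δ) (p.1 ⊗ₜ[k] p.2))
      = ∑ p ∈ s, (Coalgebra.counit p.2 : k) • p.1 := by
        refine Finset.sum_congr rfl fun p _ => ?_
        rw [LinearMap.lTensor_tmul, hD, LinearMap.comp_apply, LinearMap.lTensor_tmul,
          LinearMap.comp_apply, HopfAlgebra.mul_antipode_rTensor_comul_apply,
          TensorProduct.lift.tmul, Algebra.algebraMap_eq_smul_one, map_smul, ρ.act_one]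
    _ = m := coact_counit_sum ρ m hs

lemma MHplus_le_ker : MHplus ρ ≤ LinearMap.ker ρ.Emap := by
  rw [MHplus, Submodule.span_le]
  rintro x ⟨m, h, hc, rfl⟩
  simp [LinearMap.mem_ker, Emap_act, hc]

/-- `E` descends to the quotient `M/MH⁺`. -/
noncomputable def Ebar : (M ⧸ MHplus ρ) →ₗ[k] M :=
  (MHplus ρ).liftQ ρ.Emap (MHplus_le_ker ρ)

/-- The inverse map. -/
noncomputable def Psi : (M ⧸ MHplus ρ) ⊗[k] H →ₗ[k] M :=
  TensorProduct.lift (ρ.act ∘ₗ Ebar ρ)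

lemma mkQ_act (x : M) (g : H) :
    (MHplus ρ).mkQ (ρ.act x g) = (ε g : k) • (MHplus ρ).mkQ x := by
  have hdecomp : ρ.act x g = (ε g : k) • x + ρ.act x (g - (ε g : k) • 1) := by
    rw [map_sub, map_smul, ρ.act_one]
    abel
  have hmem : ρ.act x (g - (ε g : k) • 1) ∈ MHplus ρ := by
    refine Submodule.subset_span ⟨x, g - (ε g : k) • 1, ?_, rfl⟩
    rw [map_sub, map_smul, Bialgebra.counit_one, smul_eq_mul, mul_one, sub_self]
  rw [hdecomp, map_add, map_smul]
  simp only [Submodule.mkQ_apply]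
  rw [(Submodule.Quotient.mk_eq_zero _).2 hmem, add_zero]

lemma mkQ_Emap (m : M) : (MHplus ρ).mkQ (ρ.Emap m) = (MHplus ρ).mkQ m := by
  rw [eq_comm, Submodule.mkQ_apply, Submodule.mkQ_apply, Submodule.Quotient.eq]
  exact sub_Emap_mem ρ m

lemma Psi_left (m : M) :
    Psi ρ ((((MHplus ρ).mkQ.rTensor H) ∘ₗ ρ.coact) m) = m := by
  obtain ⟨s, hs⟩ := TensorProduct.exists_finset (ρ.coact m)
  conv_rhs => rw [← lift_Emap_coact ρ m]
  rw [LinearMap.comp_apply, hs]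
  simp only [map_sum, LinearMap.rTensor_tmul, Psi, TensorProduct.lift.tmul,
    LinearMap.comp_apply]
  refine Finset.sum_congr rfl fun p _ => ?_
  rw [Ebar, Submodule.mkQ_apply, Submodule.liftQ_apply]

lemma Psi_right (z : (M ⧸ MHplus ρ) ⊗[k] H) :
    (((MHplus ρ).mkQ.rTensor H) ∘ₗ ρ.coact) (Psi ρ z) = z := by
  have key : ∀ (x : M ⧸ MHplus ρ) (h : H),
      (((MHplus ρ).mkQ.rTensor H) ∘ₗ ρ.coact) (Psi ρ (x ⊗ₜ[k] h)) = x ⊗ₜ[k] h := by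
    intro x h
    obtain ⟨m, rfl⟩ := Submodule.mkQ_surjective _ x
    have hPsi : Psi ρ ((MHplus ρ).mkQ m ⊗ₜ[k] h) = ρ.act (ρ.Emap m) h := by
      rw [Psi, TensorProduct.lift.tmul, LinearMap.comp_apply, Ebar,
        Submodule.mkQ_apply, Submodule.liftQ_apply]
    rw [hPsi, LinearMap.comp_apply]
    let rh := ℛ k h
    have hco : ρ.coact (ρ.act (ρ.Emap m) h) = ∑ j ∈ rh.index,
        ρ.act (ρ.Emap m) (rh.left j) ⊗ₜ[k] rh.right j := by
      rw [ρ.compat _ h, coact_Emap, ← rh.eq, TensorProduct.tmul_sum, map_sum, map_sum]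
      refine Finset.sum_congr rfl fun j _ => ?_
      simp [TensorProduct.tensorTensorTensorComm_tmul]
    rw [hco, map_sum]
    calc ∑ j ∈ rh.index,
          ((MHplus ρ).mkQ.rTensor H) (ρ.act (ρ.Emap m) (rh.left j) ⊗ₜ[k] rh.right j)
        = ∑ j ∈ rh.index,
          (MHplus ρ).mkQ m ⊗ₜ[k] ((ε (rh.left j) : k) • rh.right j) := by
          refine Finset.sum_congr rfl fun j _ => ?_
          rw [LinearMap.rTensor_tmul, mkQ_act, mkQ_Emap, TensorProduct.smul_tmul]
      _ = (MHplus ρ).mkQ m ⊗ₜ[k] h := by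
          rw [← TensorProduct.tmul_sum, sum_counit_smul h rh]
  induction z using TensorProduct.induction_on with
  | zero => simp
  | tmul x h => exact key x h
  | add a b ha hb => rw [map_add, map_add, ha, hb]

theorem stmt2' : Function.Bijective (((MHplus ρ).mkQ.rTensor H) ∘ₗ ρ.coact) := by
  constructor
  · intro a b hab
    have := congrArg (Psi ρ) hab
    rwa [Psi_left, Psi_left] at this
  · intro z
    exact ⟨Psi ρ z, Psi_right ρ z⟩

end Module
end HopfAux

/-- For a right `H`-Hopf module `M`, the map `M → (M/MH⁺) ⊗ H`,
`m ↦ overline(m₍₀₎) ⊗ m₍₁₎`, is a linear isomorphism, where `H⁺ = ker ε`. -/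
theorem stmt2 (k : Type) [Field k] (H : Type) [Ring H] [HopfAlgebra k H]
    (hS : Function.Bijective (HopfAlgebra.antipode (R := k) (A := H)))
    (M : Type) [AddCommGroup M] [Module k M] (ρ : RightHopfModule k H M) :
    Function.Bijective
      (((RightHopfModule.MHplus ρ).mkQ.rTensor H) ∘ₗ ρ.coact) :=
  HopfAux.stmt2' ρ
end

section
/- The four-dimensional Hopf superalgebra H₄^(3) = k⟨g, z : g²=1, z²=0, gz=zg⟩, with g even group-like and z odd g-skew primitive, and the Hopf superalgebra H₄^(4) = k⟨g, z : g²=1, z²=0, gz=−zg⟩, with g even group-like and z odd primitive, are dual to each other: the pairing determined by ⟨g,g⟩ = −1, ⟨z,z⟩ = 1, ⟨g,z⟩ = ⟨z,g⟩ = 0 extends to a non-degenerate Hopf pairing H₄^(3) × H₄^(4) → k. -/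
open TensorProduct

section Dim4
variable (k : Type) [Field k] {A : Type} [Ring A] [Algebra k A]

/-- The Hopf superalgebra `H₄⁽²⁾ = k⟨g, z : g²=1, z²=0, gz=zg⟩`, `g` even group-like,
`z` odd primitive. -/
def IsH4two (H : HopfSuperData k A) (g z : A) : Prop :=
  H.IsGroupLike g ∧ g * g = 1 ∧ H.J z = -z ∧ z * z = 0 ∧ g * z = z * g
    ∧ H.comul z = 1 ⊗ₜ[k] z + z ⊗ₜ[k] 1
    ∧ LinearIndependent k ![1, g, z, g * z] ∧ Module.finrank k A = 4

/-- The Hopf superalgebra `H₄⁽³⁾ = k⟨g, z : g²=1, z²=0, gz=zg⟩`, `g` even group-like,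
`z` odd `g`-skew primitive. -/
def IsH4three (H : HopfSuperData k A) (g z : A) : Prop :=
  H.IsGroupLike g ∧ g * g = 1 ∧ H.J z = -z ∧ z * z = 0 ∧ g * z = z * g
    ∧ H.comul z = g ⊗ₜ[k] z + z ⊗ₜ[k] 1
    ∧ LinearIndependent k ![1, g, z, g * z] ∧ Module.finrank k A = 4

/-- The Hopf superalgebra `H₄⁽⁴⁾ = k⟨g, z : g²=1, z²=0, gz=−zg⟩`, `g` even group-like,
`z` odd primitive. -/
def IsH4four (H : HopfSuperData k A) (g z : A) : Prop :=
  H.IsGroupLike g ∧ g * g = 1 ∧ H.J z = -z ∧ z * z = 0 ∧ g * z = -(z * g)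
    ∧ H.comul z = 1 ⊗ₜ[k] z + z ⊗ₜ[k] 1
    ∧ LinearIndependent k ![1, g, z, g * z] ∧ Module.finrank k A = 4

/-- The semisimple Hopf superalgebra `A₄(ζ) = k⟨x, z : x² + z² = 1, xz = zx = 0⟩` with `x`
even, `z` odd, `Δ(x) = x⊗x + ζ z⊗z`, `Δ(z) = x⊗z + z⊗x`. -/
def IsA4 (ζ : k) (H : HopfSuperData k A) (x z : A) : Prop :=
  H.J x = x ∧ H.J z = -z ∧ x * x + z * z = 1 ∧ x * z = 0 ∧ z * x = 0
    ∧ H.comul x = x ⊗ₜ[k] x + ζ • (z ⊗ₜ[k] z)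
    ∧ H.comul z = x ⊗ₜ[k] z + z ⊗ₜ[k] x
    ∧ H.counit x = 1
    ∧ LinearIndependent k ![1, x, x * x, z] ∧ Module.finrank k A = 4

end Dim4

lemma tsm_left_even {k : Type} [Field k] (hchar : (2:k) ≠ 0) {A : Type} [Ring A] [Algebra k A]
    (J : A →ₗ[k] A) (a b c d : A) (hb : J b = b) :
    tensorSuperMul k A J ((a ⊗ₜ[k] b) ⊗ₜ[k] (c ⊗ₜ[k] d)) = (a*c) ⊗ₜ[k] (b*d) := by
  simp only [tensorSuperMul, koszul, LinearMap.comp_apply, LinearEquiv.coe_coe,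
    TensorProduct.tensorTensorTensorComm_tmul, LinearMap.smul_apply, LinearMap.add_apply,
    LinearMap.sub_apply, TensorProduct.map_tmul, LinearMap.id_apply, hb, map_smul,
    LinearMap.mul'_apply, map_add, map_sub, LinearMap.id_coe, id_eq]
  match_scalars <;> field_simp <;> norm_num

lemma pairTensor_tmul {k : Type} [Field k] {A A' : Type} [Ring A] [Algebra k A]
    [Ring A'] [Algebra k A'] (Bp : A →ₗ[k] A' →ₗ[k] k) (x y : A) (u v : A') :
    pairTensor Bp ((x ⊗ₜ[k] y) ⊗ₜ[k] (u ⊗ₜ[k] v)) = Bp x u * Bp y v := by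
  simp [pairTensor, TensorProduct.tensorTensorTensorComm_tmul, LinearMap.mul'_apply]

set_option maxHeartbeats 4000000 in
/-- The Hopf superalgebras `H₄⁽³⁾` and `H₄⁽⁴⁾` are dual to each other: the
pairing determined by `⟨g,g⟩ = −1`, `⟨z,z⟩ = 1`, `⟨g,z⟩ = ⟨z,g⟩ = 0` extends to a
non-degenerate Hopf pairing `H₄⁽³⁾ × H₄⁽⁴⁾ → k`. -/
theorem stmt14 (k : Type) [Field k] (hchar : (2:k) ≠ 0)
    (A : Type) [Ring A] [Algebra k A] (H3 : HopfSuperData k A) (g z : A)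
    (h3 : IsH4three k H3 g z)
    (A' : Type) [Ring A'] [Algebra k A'] (H4 : HopfSuperData k A') (g' z' : A')
    (h4 : IsH4four k H4 g' z') :
    ∃ Bp : A →ₗ[k] A' →ₗ[k] k,
      IsHopfPairing H3 H4 Bp ∧ PairNondeg Bp
      ∧ Bp g g' = -1 ∧ Bp z z' = 1 ∧ Bp g z' = 0 ∧ Bp z g' = 0 := by
  classical
  obtain ⟨⟨hJg, hεg, hΔg⟩, hg2, hJz, hz2, hgz, hΔz, hli3, hdim3⟩ := h3
  obtain ⟨⟨hJg', hεg', hΔg'⟩, hg2', hJz', hz2', hgz', hΔz', hli4, hdim4⟩ := h4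
  have hone3 : (1:A) ≠ 0 := by simpa using hli3.ne_zero 0
  have hone4 : (1:A') ≠ 0 := by simpa using hli4.ne_zero 0
  -- multiplication tables
  have p_ggz : g*(g*z) = z := by rw [← mul_assoc, hg2, one_mul]
  have p_zg : z*g = g*z := hgz.symm
  have p_zgz : z*(g*z) = 0 := by rw [← mul_assoc, ← hgz, mul_assoc, hz2, mul_zero]
  have p_gzg : (g*z)*g = z := by rw [mul_assoc, p_zg, ← mul_assoc, hg2, one_mul]
  have p_gzz : (g*z)*z = 0 := by rw [mul_assoc, hz2, mul_zero]
  have p_gzgz : (g*z)*(g*z) = 0 := by rw [mul_assoc, p_zgz, mul_zero]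
  have q_ggz : g'*(g'*z') = z' := by rw [← mul_assoc, hg2', one_mul]
  have q_zg : z'*g' = -(g'*z') := by rw [hgz', neg_neg]
  have q_zgz : z'*(g'*z') = 0 := by
    rw [← mul_assoc, q_zg, neg_mul, mul_assoc, hz2', mul_zero, neg_zero]
  have q_gzg : (g'*z')*g' = -z' := by rw [mul_assoc, q_zg, mul_neg, ← mul_assoc, hg2', one_mul]
  have q_gzz : (g'*z')*z' = 0 := by rw [mul_assoc, hz2', mul_zero]
  have q_gzgz : (g'*z')*(g'*z') = 0 := by rw [mul_assoc, q_zgz, mul_zero]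
  -- J values
  have hJgz : H3.J (g*z) = -(g*z) := by rw [map_mul, hJg, hJz, mul_neg]
  have hJgz' : H4.J (g'*z') = -(g'*z') := by rw [map_mul, hJg', hJz', mul_neg]
  -- counit values
  have hεz : H3.counit z = 0 := by
    have h := H3.rTensor_counit_comul z
    rw [hΔz] at h
    simp only [map_add, LinearMap.rTensor_tmul, hεg, H3.counit_one, TensorProduct.lid_tmul,
      one_smul] at h
    have h0 : H3.counit z • (1:A) = 0 := add_eq_left.mp h
    rcases smul_eq_zero.mp h0 with h1 | h1
    · exact h1
    · exact absurd h1 hone3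
  have hεz' : H4.counit z' = 0 := by
    have h := H4.rTensor_counit_comul z'
    rw [hΔz'] at h
    simp only [map_add, LinearMap.rTensor_tmul, hεg', H4.counit_one, TensorProduct.lid_tmul,
      one_smul] at h
    have h0 : H4.counit z' • (1:A') = 0 := add_eq_left.mp h
    rcases smul_eq_zero.mp h0 with h1 | h1
    · exact h1
    · exact absurd h1 hone4
  have hεgz : H3.counit (g*z) = 0 := by rw [H3.counit_mul, hεz, mul_zero]
  have hεgz' : H4.counit (g'*z') = 0 := by rw [H4.counit_mul, hεz', mul_zero]
  -- comul of g*z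
  have hΔgz : H3.comul (g*z) = 1 ⊗ₜ[k] (g*z) + (g*z) ⊗ₜ[k] g := by
    rw [H3.comul_mul, hΔg, hΔz, TensorProduct.tmul_add, map_add,
      tsm_left_even hchar _ _ _ _ _ (by simpa using hJg),
      tsm_left_even hchar _ _ _ _ _ (by simpa using hJg), hg2, mul_one]
  have hΔgz' : H4.comul (g'*z') = g' ⊗ₜ[k] (g'*z') + (g'*z') ⊗ₜ[k] g' := by
    rw [H4.comul_mul, hΔg', hΔz', TensorProduct.tmul_add, map_add,
      tsm_left_even hchar _ _ _ _ _ (by simpa using hJg'),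
      tsm_left_even hchar _ _ _ _ _ (by simpa using hJg'), mul_one]
  -- bases
  have hcard3 : Fintype.card (Fin 4) = Module.finrank k A := by simp [hdim3]
  have hcard4 : Fintype.card (Fin 4) = Module.finrank k A' := by simp [hdim4]
  obtain ⟨b3, hb3⟩ : ∃ b : Module.Basis (Fin 4) k A, ∀ i, b i = ![1, g, z, g*z] i :=
    ⟨basisOfLinearIndependentOfCardEqFinrank hli3 hcard3,
      fun i => congrFun (coe_basisOfLinearIndependentOfCardEqFinrank hli3 hcard3) i⟩
  obtain ⟨b4, hb4⟩ : ∃ b : Module.Basis (Fin 4) k A', ∀ i, b i = ![1, g', z', g'*z'] i :=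
    ⟨basisOfLinearIndependentOfCardEqFinrank hli4 hcard4,
      fun i => congrFun (coe_basisOfLinearIndependentOfCardEqFinrank hli4 hcard4) i⟩
  obtain ⟨Bp, hBp0⟩ : ∃ Bp : A →ₗ[k] A' →ₗ[k] k, ∀ i j, Bp (b3 i) (b4 j) = ![![(1:k),1,0,0],![1,-1,0,0],![0,0,1,-1],![0,0,1,1]] i j :=
    ⟨b3.constr k (fun i => b4.constr k (fun j => ![![(1:k),1,0,0],![1,-1,0,0],![0,0,1,-1],![0,0,1,1]] i j)),
      fun i j => by rw [Module.Basis.constr_basis, Module.Basis.constr_basis]⟩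
  have hBpv : ∀ i j, Bp (![1, g, z, g*z] i) (![1, g', z', g'*z'] j) = ![![(1:k),1,0,0],![1,-1,0,0],![0,0,1,-1],![0,0,1,1]] i j := by
    intro i j
    rw [← hb3, ← hb4]; exact hBp0 i j
  have B00 : Bp 1 1 = 1 := by simpa using hBpv 0 0
  have B01 : Bp 1 g' = 1 := by simpa using hBpv 0 1
  have B02 : Bp 1 z' = 0 := by simpa using hBpv 0 2
  have B03 : Bp 1 (g'*z') = 0 := by simpa using hBpv 0 3
  have B10 : Bp g 1 = 1 := by simpa using hBpv 1 0
  have B11 : Bp g g' = -1 := by simpa using hBpv 1 1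
  have B12 : Bp g z' = 0 := by simpa using hBpv 1 2
  have B13 : Bp g (g'*z') = 0 := by simpa using hBpv 1 3
  have B20 : Bp z 1 = 0 := by simpa using hBpv 2 0
  have B21 : Bp z g' = 0 := by simpa using hBpv 2 1
  have B22 : Bp z z' = 1 := by simpa using hBpv 2 2
  have B23 : Bp z (g'*z') = -1 := by simpa using hBpv 2 3
  have B30 : Bp (g*z) 1 = 0 := by simpa using hBpv 3 0
  have B31 : Bp (g*z) g' = 0 := by simpa using hBpv 3 1
  have B32 : Bp (g*z) z' = 1 := by simpa using hBpv 3 2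
  have B33 : Bp (g*z) (g'*z') = 1 := by simpa using hBpv 3 3
  -- parity
  have parity : ∀ a a', Bp (H3.J a) (H4.J a') = Bp a a' := by
    have key : (Bp ∘ₗ H3.J.toLinearMap).compl₂ H4.J.toLinearMap = Bp := by
      apply b3.ext; intro i; apply b4.ext; intro j
      rw [hb3, hb4]
      fin_cases i <;> fin_cases j <;>
        simp [LinearMap.compl₂_apply, hJg, hJz, hJgz, hJg', hJz', hJgz',
          B00, B01, B02, B03, B10, B11, B12, B13, B20, B21, B22, B23, B30, B31, B32, B33]
    intro a a'
    exact LinearMap.congr_fun (LinearMap.congr_fun key a) a'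
  -- pair one right/left
  have one_right : ∀ a, Bp a 1 = H3.counit a := by
    have key : Bp.flip 1 = H3.counit := by
      apply b3.ext; intro i
      rw [hb3]
      fin_cases i <;>
        simp [LinearMap.flip_apply, B00, B10, B20, B30, H3.counit_one, hεg, hεz, hεgz]
    intro a; exact LinearMap.congr_fun key a
  have one_left : ∀ b, Bp 1 b = H4.counit b := by
    have key : Bp 1 = H4.counit := by
      apply b4.ext; intro j
      rw [hb4]
      fin_cases j <;>
        simp [B00, B01, B02, B03, H4.counit_one, hεg', hεz', hεgz']
    intro b; exact LinearMap.congr_fun key b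
  -- pair_mul_right
  have mul_right : ∀ (a : A) (b b' : A'),
      Bp a (b * b') = pairTensor Bp (H3.comul a ⊗ₜ[k] (b ⊗ₜ[k] b')) := by
    have key : TensorProduct.lift (Bp.compl₂ (LinearMap.mul' k A'))
        = pairTensor Bp ∘ₗ TensorProduct.map H3.comul LinearMap.id := by
      apply (b3.tensorProduct (b4.tensorProduct b4)).ext
      rintro ⟨i, j, l⟩
      rw [Module.Basis.tensorProduct_apply, Module.Basis.tensorProduct_apply, hb3, hb4, hb4]
      fin_cases i <;> fin_cases j <;> fin_cases l <;>
        simp [TensorProduct.lift.tmul, LinearMap.compl₂_apply, LinearMap.mul'_apply,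
          H3.comul_one, hΔg, hΔz, hΔgz, pairTensor_tmul, TensorProduct.add_tmul,
          hg2', q_ggz, q_zg, q_zgz, q_gzg, q_gzz, q_gzgz, hz2',
          B00, B01, B02, B03, B10, B11, B12, B13, B20, B21, B22, B23, B30, B31, B32, B33]
    intro a b b'
    have := LinearMap.congr_fun key (a ⊗ₜ[k] (b ⊗ₜ[k] b'))
    simpa [TensorProduct.lift.tmul, LinearMap.compl₂_apply, LinearMap.mul'_apply] using this
  -- pair_mul_left
  have mul_left : ∀ (a a' : A) (b : A'),
      Bp (a * a') b = pairTensor Bp ((a ⊗ₜ[k] a') ⊗ₜ[k] H4.comul b) := by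
    have key : TensorProduct.lift (Bp ∘ₗ LinearMap.mul' k A)
        = pairTensor Bp ∘ₗ TensorProduct.map LinearMap.id H4.comul := by
      apply ((b3.tensorProduct b3).tensorProduct b4).ext
      rintro ⟨⟨i, j⟩, l⟩
      rw [Module.Basis.tensorProduct_apply, Module.Basis.tensorProduct_apply, hb3, hb3, hb4]
      fin_cases i <;> fin_cases j <;> fin_cases l <;>
        simp [TensorProduct.lift.tmul, LinearMap.mul'_apply,
          H4.comul_one, hΔg', hΔz', hΔgz', pairTensor_tmul, TensorProduct.tmul_add,
          hg2, p_ggz, p_zg, p_zgz, p_gzg, p_gzz, p_gzgz, hz2,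
          B00, B01, B02, B03, B10, B11, B12, B13, B20, B21, B22, B23, B30, B31, B32, B33]
    intro a a' b
    have := LinearMap.congr_fun key ((a ⊗ₜ[k] a') ⊗ₜ[k] b)
    simpa [TensorProduct.lift.tmul, LinearMap.mul'_apply] using this
  -- nondegeneracy
  have nondeg : PairNondeg Bp := by
    constructor
    · intro a ha
      have hrep : ∀ j, ∑ i, b3.repr a i * ![![(1:k),1,0,0],![1,-1,0,0],![0,0,1,-1],![0,0,1,1]] i j = 0 := by
        intro j
        have h := ha (![1, g', z', g'*z'] j)
        rw [← b3.sum_repr a] at h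
        simp only [map_sum, map_smul, LinearMap.sum_apply, LinearMap.smul_apply,
          smul_eq_mul] at h
        calc ∑ i, b3.repr a i * ![![(1:k),1,0,0],![1,-1,0,0],![0,0,1,-1],![0,0,1,1]] i j
            = ∑ i, b3.repr a i * Bp (b3 i) (![1, g', z', g'*z'] j) :=
              Finset.sum_congr rfl fun i _ => by rw [hb3, hBpv]
          _ = 0 := h
      have h0 := hrep 0; have h1 := hrep 1; have h2 := hrep 2; have h3' := hrep 3
      simp [Fin.sum_univ_four, Matrix.vecHead, Matrix.vecTail, Matrix.cons_val_two, Matrix.cons_val_three, Matrix.tail_cons, Matrix.head_cons, Matrix.cons_val_zero, Matrix.cons_val_one] at h0 h1 h2 h3'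
      have e0 : b3.repr a 0 = 0 := by
        have h20 : (2:k) * b3.repr a 0 = 0 := by linear_combination h0 + h1
        exact (mul_eq_zero.mp h20).resolve_left hchar
      have e1 : b3.repr a 1 = 0 := by
        have h21 : (2:k) * b3.repr a 1 = 0 := by linear_combination h0 - h1
        exact (mul_eq_zero.mp h21).resolve_left hchar
      have e2 : b3.repr a 2 = 0 := by
        have h22 : (2:k) * b3.repr a 2 = 0 := by linear_combination h2 - h3'
        exact (mul_eq_zero.mp h22).resolve_left hchar
      have e3 : b3.repr a 3 = 0 := by
        have h23 : (2:k) * b3.repr a 3 = 0 := by linear_combination h2 + h3'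
        exact (mul_eq_zero.mp h23).resolve_left hchar
      apply b3.ext_elem
      intro i
      fin_cases i <;> simp [e0, e1, e2, e3]
    · intro b hb
      have hrep : ∀ i, ∑ j, b4.repr b j * ![![(1:k),1,0,0],![1,-1,0,0],![0,0,1,-1],![0,0,1,1]] i j = 0 := by
        intro i
        have h := hb (![1, g, z, g*z] i)
        rw [← b4.sum_repr b] at h
        simp only [map_sum, map_smul, smul_eq_mul] at h
        calc ∑ j, b4.repr b j * ![![(1:k),1,0,0],![1,-1,0,0],![0,0,1,-1],![0,0,1,1]] i j
            = ∑ j, b4.repr b j * Bp (![1, g, z, g*z] i) (b4 j) :=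
              Finset.sum_congr rfl fun j _ => by rw [hb4, hBpv]
          _ = 0 := h
      have h0 : b4.repr b 0 + b4.repr b 1 = 0 := by
        have h := hrep 0; rw [Fin.sum_univ_four] at h
        simpa [Matrix.vecHead, Matrix.vecTail, Matrix.cons_val_two, Matrix.cons_val_three, Matrix.tail_cons, Matrix.head_cons, Matrix.cons_val_zero, Matrix.cons_val_one] using h
      have h1 : b4.repr b 0 - b4.repr b 1 = 0 := by
        have h := hrep 1; rw [Fin.sum_univ_four] at h
        simp [Matrix.vecHead, Matrix.vecTail, Matrix.cons_val_two, Matrix.cons_val_three, Matrix.tail_cons, Matrix.head_cons, Matrix.cons_val_zero, Matrix.cons_val_one] at h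
        linear_combination h
      have h2 : b4.repr b 2 - b4.repr b 3 = 0 := by
        have h := hrep 2; rw [Fin.sum_univ_four] at h
        simp [Matrix.vecHead, Matrix.vecTail, Matrix.cons_val_two, Matrix.cons_val_three, Matrix.tail_cons, Matrix.head_cons, Matrix.cons_val_zero, Matrix.cons_val_one] at h
        linear_combination h
      have h3' : b4.repr b 2 + b4.repr b 3 = 0 := by
        have h := hrep 3; rw [Fin.sum_univ_four] at h
        simpa [Matrix.vecHead, Matrix.vecTail, Matrix.cons_val_two, Matrix.cons_val_three, Matrix.tail_cons, Matrix.head_cons, Matrix.cons_val_zero, Matrix.cons_val_one] using h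
      have e0 : b4.repr b 0 = 0 := by
        have h20 : (2:k) * b4.repr b 0 = 0 := by linear_combination h0 + h1
        exact (mul_eq_zero.mp h20).resolve_left hchar
      have e1 : b4.repr b 1 = 0 := by
        have h21 : (2:k) * b4.repr b 1 = 0 := by linear_combination h0 - h1
        exact (mul_eq_zero.mp h21).resolve_left hchar
      have e2 : b4.repr b 2 = 0 := by
        have h22 : (2:k) * b4.repr b 2 = 0 := by linear_combination h2 + h3'
        exact (mul_eq_zero.mp h22).resolve_left hchar
      have e3 : b4.repr b 3 = 0 := by
        have h23 : (2:k) * b4.repr b 3 = 0 := by linear_combination h3' - h2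
        exact (mul_eq_zero.mp h23).resolve_left hchar
      apply b4.ext_elem
      intro j
      fin_cases j <;> simp [e0, e1, e2, e3]
  exact ⟨Bp, ⟨parity, mul_right, mul_left, one_right, one_left⟩, nondeg, B11, B22, B12, B21⟩
end
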